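/- arXiv:2512.00763 — 6 statements merged into one kernel-verified Lean document; each statement's English description precedes it below -/
import Mathlib

section
/- For every d ≥ 1 the softmax map σ: ℝ^d → ℝ^d is 1-Lipschitz with respect to the Euclidean (ℓ2) norm: for all x, y ∈ ℝ^d, ‖σ(x) − σ(y)‖₂ ≤ ‖x − y‖₂. Equivalently, for any probability vector p, the gradient of f(θ) = KL(p‖σ(θ)) satisfies ‖∇f(x) − ∇f(y)‖₂ ≤ ‖x − y‖₂, so f is 1-smooth with respect to the ℓ2 norm. -/
open Finset

/-- The softmax map `σ : ℝ^d → ℝ^d`, `σ(θ)_k = exp(θ_k) / ∑_j exp(θ_j)`. -/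
noncomputable def softmax {d : ℕ} (θ : Fin d → ℝ) : Fin d → ℝ :=
  fun k => Real.exp (θ k) / ∑ j, Real.exp (θ j)

lemma softmax_nonneg {d : ℕ} (θ : Fin d → ℝ) (k : Fin d) : 0 ≤ softmax θ k := by
  unfold softmax
  positivity

lemma sum_exp_pos {d : ℕ} (hd : 1 ≤ d) (θ : Fin d → ℝ) : 0 < ∑ j, Real.exp (θ j) := by
  apply Finset.sum_pos (fun j _ => Real.exp_pos _)
  simpa [Finset.univ_nonempty_iff, ← Fin.pos_iff_nonempty] using (show 0 < d from hd)

lemma softmax_sum_one {d : ℕ} (hd : 1 ≤ d) (θ : Fin d → ℝ) : ∑ k, softmax θ k = 1 := by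
  unfold softmax
  rw [← Finset.sum_div, div_self (sum_exp_pos hd θ).ne']

lemma softmax_le_one {d : ℕ} (hd : 1 ≤ d) (θ : Fin d → ℝ) (k : Fin d) : softmax θ k ≤ 1 := by
  rw [← softmax_sum_one hd θ]
  exact Finset.single_le_sum (fun j _ => softmax_nonneg θ j) (Finset.mem_univ k)

/-- Key quadratic bound: if `σ` is a probability vector then
`∑ (σ k)^2 (v k - m)^2 ≤ ∑ v k ^ 2` where `m = ∑ σ j * v j`. -/
lemma key_bound {d : ℕ} (σ v : Fin d → ℝ) (h0 : ∀ k, 0 ≤ σ k) (h1 : ∀ k, σ k ≤ 1)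
    (hs : ∑ k, σ k = 1) :
    ∑ k, (σ k * (v k - ∑ j, σ j * v j)) ^ 2 ≤ ∑ k, v k ^ 2 := by
  set m := ∑ j, σ j * v j with hm
  have step1 : ∑ k, (σ k * (v k - m)) ^ 2 ≤ ∑ k, σ k * (v k - m) ^ 2 := by
    apply Finset.sum_le_sum
    intro k _
    have : (σ k * (v k - m)) ^ 2 = σ k ^ 2 * (v k - m) ^ 2 := by ring
    rw [this]
    apply mul_le_mul_of_nonneg_right _ (sq_nonneg _)
    nlinarith [h0 k, h1 k]
  have step2 : ∑ k, σ k * (v k - m) ^ 2 = (∑ k, σ k * v k ^ 2) - m ^ 2 := by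
    have expand : ∀ k, σ k * (v k - m) ^ 2
        = σ k * v k ^ 2 - 2 * m * (σ k * v k) + m ^ 2 * σ k := by intro k; ring
    rw [Finset.sum_congr rfl (fun k _ => expand k)]
    rw [Finset.sum_add_distrib, Finset.sum_sub_distrib, ← Finset.mul_sum, ← Finset.mul_sum,
      ← hm, hs]
    ring
  have step3 : ∑ k, σ k * v k ^ 2 ≤ ∑ k, v k ^ 2 := by
    apply Finset.sum_le_sum
    intro k _
    nlinarith [h0 k, h1 k, sq_nonneg (v k)]
  nlinarith [sq_nonneg m]

/-- derivative of softmax along a line. -/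
lemma hasDerivAt_softmax_line {d : ℕ} (hd : 1 ≤ d) (y v : Fin d → ℝ) (t : ℝ) (k : Fin d) :
    HasDerivAt (fun s => softmax (fun i => y i + s * v i) k)
      (softmax (fun i => y i + t * v i) k *
        (v k - ∑ j, softmax (fun i => y i + t * v i) j * v j)) t := by
  set θ : Fin d → ℝ := fun i => y i + t * v i with hθ
  have hS : 0 < ∑ j, Real.exp (θ j) := sum_exp_pos hd θ
  have hN : ∀ j : Fin d, HasDerivAt (fun s => Real.exp (y j + s * v j))
      (Real.exp (θ j) * v j) t := by
    intro j
    have h1 : HasDerivAt (fun s : ℝ => y j + s * v j) (v j) t := by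
      simpa using ((hasDerivAt_id t).mul_const (v j)).const_add (y j)
    exact (Real.hasDerivAt_exp (θ j)).comp t h1
  have hSum : HasDerivAt (fun s => ∑ j, Real.exp (y j + s * v j))
      (∑ j, Real.exp (θ j) * v j) t := HasDerivAt.fun_sum (fun j _ => hN j)
  have hdiv : HasDerivAt (fun s => softmax (fun i => y i + s * v i) k)
      ((Real.exp (θ k) * v k * ∑ j, Real.exp (θ j) - Real.exp (θ k) * ∑ j, Real.exp (θ j) * v j) /
        (∑ j, Real.exp (θ j)) ^ 2) t := (hN k).div hSum (sum_exp_pos hd (fun i => y i + t * v i)).ne'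
  convert hdiv using 1
  have hsum_eq : ∑ j, softmax θ j * v j
      = (∑ j, Real.exp (θ j) * v j) / (∑ j, Real.exp (θ j)) := by
    unfold softmax
    rw [Finset.sum_div]
    apply Finset.sum_congr rfl
    intro j _
    ring
  show softmax θ k * (v k - ∑ j, softmax θ j * v j) = _
  rw [hsum_eq]
  unfold softmax
  field_simp

/-- the softmax map is 1-Lipschitz w.r.t. the Euclidean (ℓ2) norm:
`‖σ(x) − σ(y)‖₂ ≤ ‖x − y‖₂` for all `x, y ∈ ℝ^d` (so `f(θ) = KL(p‖σ(θ))` is 1-smooth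
with respect to the ℓ2 norm). -/
theorem softmax_lipschitz_l2 (d : ℕ) (hd : 1 ≤ d) :
    ∀ x y : Fin d → ℝ,
      Real.sqrt (∑ k, (softmax x k - softmax y k) ^ 2) ≤
        Real.sqrt (∑ k, (x k - y k) ^ 2) := by
  intro x y
  set v : Fin d → ℝ := fun i => x i - y i with hv
  set C : ℝ := Real.sqrt (∑ k, v k ^ 2) with hC
  -- the path in Euclidean space
  set E := EuclideanSpace ℝ (Fin d)
  set L : (Fin d → ℝ) →L[ℝ] E := (EuclideanSpace.equiv (Fin d) ℝ).symm.toContinuousLinearMap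
    with hL
  set γ : ℝ → E := fun t => L (softmax (fun i => y i + t * v i)) with hγ
  set γ' : ℝ → E := fun t => L (fun k => softmax (fun i => y i + t * v i) k *
    (v k - ∑ j, softmax (fun i => y i + t * v i) j * v j)) with hγ'
  have hderiv : ∀ t : ℝ, HasDerivAt γ (γ' t) t := by
    intro t
    apply (L.hasFDerivAt).comp_hasDerivAt
    rw [hasDerivAt_pi]
    intro k
    exact hasDerivAt_softmax_line hd y v t k
  have hbound : ∀ t : ℝ, ‖γ' t‖ ≤ C := by
    intro t
    rw [hγ']
    rw [EuclideanSpace.norm_eq, hC]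
    apply Real.sqrt_le_sqrt
    have : ∀ k : Fin d, ‖(softmax (fun i => y i + t * v i) k *
        (v k - ∑ j, softmax (fun i => y i + t * v i) j * v j))‖ ^ 2
        = (softmax (fun i => y i + t * v i) k *
          (v k - ∑ j, softmax (fun i => y i + t * v i) j * v j)) ^ 2 := fun k => by
      rw [Real.norm_eq_abs, sq_abs]
    calc ∑ k, ‖(L (fun k => softmax (fun i => y i + t * v i) k *
          (v k - ∑ j, softmax (fun i => y i + t * v i) j * v j)) : E) k‖ ^ 2
        = ∑ k, (softmax (fun i => y i + t * v i) k *
          (v k - ∑ j, softmax (fun i => y i + t * v i) j * v j)) ^ 2 := by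
          apply Finset.sum_congr rfl; intro k _; rw [← this k]; rfl
      _ ≤ ∑ k, v k ^ 2 := key_bound _ v (softmax_nonneg _)
          (softmax_le_one hd _) (softmax_sum_one hd _)
  have hfinal : ‖γ 1 - γ 0‖ ≤ C := by
    apply norm_image_sub_le_of_norm_deriv_le_segment_01'
      (fun t _ => (hderiv t).hasDerivWithinAt) (fun t _ => hbound t)
  have hx : (fun i => y i + (1:ℝ) * v i) = x := by funext i; simp [hv]
  have hy0 : (fun i => y i + (0:ℝ) * v i) = y := by funext i; simp
  have hnorm : ‖γ 1 - γ 0‖ = Real.sqrt (∑ k, (softmax x k - softmax y k) ^ 2) := by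
    have h1 : γ 1 = L (softmax x) := by simp only [hγ]; rw [hx]
    have h0 : γ 0 = L (softmax y) := by simp only [hγ]; rw [hy0]
    rw [h1, h0, ← map_sub, EuclideanSpace.norm_eq]
    congr 1
    apply Finset.sum_congr rfl
    intro k _
    rw [Real.norm_eq_abs, sq_abs]
    rfl
  rw [← hnorm]
  exact hfinal
end

section
/- For every d ≥ 1 and all x, y ∈ ℝ^d, the softmax map satisfies ‖σ(x) − σ(y)‖₁ ≤ ‖x − y‖_∞. Equivalently, for any probability vector p, the function f(θ) = KL(p‖σ(θ)) is 1-smooth with respect to the ℓ∞ norm: ‖∇f(x) − ∇f(y)‖₁ ≤ ‖x − y‖_∞ for all x, y ∈ ℝ^d. -/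
/-!
Put `t = ‖x - y‖`. The `ℓ¹` distance of two probability vectors is twice the largest difference
of the masses they give to a set `S`. Since `e^{x_k}` and `e^{y_k}` differ by a factor of at most
`e^t`, the odds `σ(x)(S) / σ(x)(Sᶜ)` and `σ(y)(S) / σ(y)(Sᶜ)` differ by a factor of at most
`e^{2t}`, which bounds the mass difference by `(e^t - 1) / (e^t + 1) = tanh (t / 2)`. Finally
`tanh (t / 2) ≤ t / 2` because the logistic sigmoid is `1/4`-Lipschitz.
-/

open Finset Real

theorem Finset.sum_abs_eq_two_mul_sum_filter_pos {ι R : Type*} [CommRing R] [LinearOrder R]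
    [IsOrderedRing R] (s : Finset ι) (a : ι → R) (h : ∑ i ∈ s, a i = 0) :
    ∑ i ∈ s, |a i| = 2 * ∑ i ∈ s with 0 < a i, a i := by
  have habs : ∀ i, |a i| = 2 * (if 0 < a i then a i else 0) - a i := fun i => by
    split_ifs with hi
    · rw [abs_of_pos hi]; ring
    · rw [abs_of_nonpos (not_lt.mp hi)]; ring
  simp only [habs, sum_filter, sum_sub_distrib, ← mul_sum, h, sub_zero]

theorem Real.sigmoid_sub_sigmoid_le {a b : ℝ} (hab : a ≤ b) :
    sigmoid b - sigmoid a ≤ 4⁻¹ * (b - a) := by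
  refine image_sub_le_mul_sub_of_deriv_le differentiable_sigmoid (fun x => ?_) hab
  rw [deriv_sigmoid]
  nlinarith [sq_nonneg (2 * sigmoid x - 1)]

theorem Real.exp_sub_one_div_exp_add_one_le {t : ℝ} (ht : 0 ≤ t) :
    (exp t - 1) / (exp t + 1) ≤ t / 2 := by
  have h : (exp t - 1) / (exp t + 1) = 2 * (sigmoid t - sigmoid 0) := by
    rw [sigmoid_zero, sigmoid_def, exp_neg]
    field_simp
    ring
  linarith [sigmoid_sub_sigmoid_le ht]

theorem div_add_sub_div_add_le {a a' b b' r : ℝ} (hb : 0 ≤ b) (hb' : 0 ≤ b')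
    (haa' : 0 < a + a') (hbb' : 0 < b + b') (hr : 1 ≤ r)
    (hab : a ≤ r * b) (hba' : b' ≤ r * a') :
    a / (a + a') - b / (b + b') ≤ (r - 1) / (r + 1) := by
  have hD : 0 < r ^ 2 * b + b' := by
    nlinarith [mul_le_mul_of_nonneg_right (one_le_pow₀ hr : 1 ≤ r ^ 2) hb]
  have hworst : a / (a + a') ≤ r ^ 2 * b / (r ^ 2 * b + b') := by
    rw [div_le_div_iff₀ haa' hD]
    nlinarith [mul_le_mul hab hba' hb' (by positivity)]
  -- after clearing denominators this is `(r b - b')² ≥ 0`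
  have hbound : r ^ 2 * b / (r ^ 2 * b + b') - b / (b + b') ≤ (r - 1) / (r + 1) := by
    rw [div_sub_div _ _ hD.ne' hbb'.ne', div_le_div_iff₀ (by positivity) (by positivity)]
    nlinarith [mul_nonneg (mul_nonneg hb hb') (sq_nonneg (r * b - b')), sq_nonneg (r * b - b')]
  linarith

theorem exp_le_exp_norm_sub_mul_exp {ι : Type*} [Fintype ι] (x y : ι → ℝ) (k : ι) :
    exp (x k) ≤ exp ‖x - y‖ * exp (y k) := by
  rw [← exp_add, exp_le_exp]
  have : x k - y k ≤ ‖x - y‖ := (le_abs_self _).trans (norm_le_pi_norm (x - y) k)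
  linarith

theorem sum_softmax_eq_div {d : ℕ} (θ : Fin d → ℝ) (S : Finset (Fin d)) :
    ∑ k ∈ S, softmax θ k = (∑ k ∈ S, exp (θ k)) / ∑ j, exp (θ j) :=
  (sum_div ..).symm

theorem sum_softmax {d : ℕ} [NeZero d] (θ : Fin d → ℝ) : ∑ k, softmax θ k = 1 := by
  rw [sum_softmax_eq_div, div_self (sum_pos (fun j _ => exp_pos (θ j)) univ_nonempty).ne']

theorem sum_softmax_sub_sum_softmax_le {d : ℕ} [NeZero d] (x y : Fin d → ℝ)
    (S : Finset (Fin d)) :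
    ∑ k ∈ S, softmax x k - ∑ k ∈ S, softmax y k
      ≤ (exp ‖x - y‖ - 1) / (exp ‖x - y‖ + 1) := by
  have hsplit (θ : Fin d → ℝ) :
      ∑ j, exp (θ j) = ∑ k ∈ S, exp (θ k) + ∑ k ∈ Sᶜ, exp (θ k) :=
    (sum_add_sum_compl S _).symm
  have hpos (θ : Fin d → ℝ) : 0 < ∑ k ∈ S, exp (θ k) + ∑ k ∈ Sᶜ, exp (θ k) :=
    hsplit θ ▸ sum_pos (fun j _ => exp_pos (θ j)) univ_nonempty
  rw [sum_softmax_eq_div, sum_softmax_eq_div, hsplit, hsplit]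
  refine div_add_sub_div_add_le (by positivity) (by positivity) (hpos x) (hpos y)
    (one_le_exp (norm_nonneg _)) ?_ ?_
  · rw [mul_sum]
    exact sum_le_sum fun k _ => exp_le_exp_norm_sub_mul_exp x y k
  · rw [mul_sum, norm_sub_rev]
    exact sum_le_sum fun k _ => exp_le_exp_norm_sub_mul_exp y x k

theorem sum_abs_softmax_sub_le {d : ℕ} [NeZero d] (x y : Fin d → ℝ) :
    ∑ k, |softmax x k - softmax y k| ≤ 2 * ((exp ‖x - y‖ - 1) / (exp ‖x - y‖ + 1)) := by
  have hzero : ∑ k, (softmax x k - softmax y k) = 0 := by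
    rw [sum_sub_distrib, sum_softmax, sum_softmax, sub_self]
  rw [sum_abs_eq_two_mul_sum_filter_pos _ _ hzero, sum_sub_distrib]
  gcongr
  exact sum_softmax_sub_sum_softmax_le x y _

theorem softmax_lipschitz_linf_general (d : ℕ) :
    ∀ x y : Fin d → ℝ,
      (∑ k, |softmax x k - softmax y k|) ≤ ‖x - y‖ := by
  intro x y
  rcases eq_zero_or_neZero d with rfl | _
  · simp
  calc ∑ k, |softmax x k - softmax y k|
      ≤ 2 * ((exp ‖x - y‖ - 1) / (exp ‖x - y‖ + 1)) := sum_abs_softmax_sub_le x y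
    _ ≤ ‖x - y‖ := by linarith [exp_sub_one_div_exp_add_one_le (norm_nonneg (x - y))]

/-- `‖σ(x) − σ(y)‖₁ ≤ ‖x − y‖_∞` for all `x, y ∈ ℝ^d` (the norm on
`Fin d → ℝ` is the sup norm), so `f(θ) = KL(p‖σ(θ))` is 1-smooth w.r.t. the ℓ∞ norm. -/
theorem softmax_lipschitz_linf (d : ℕ) (hd : 1 ≤ d) :
    ∀ x y : Fin d → ℝ,
      (∑ k, |softmax x k - softmax y k|) ≤ ‖x - y‖ :=
  softmax_lipschitz_linf_general d
end

section
/- Let d ≥ 2. For every ε > 0 there exist θ ∈ ℝ^d and u ∈ ℝ^d with ‖u‖₂ = 1 such that ∑_{k=1}^d σ(θ)_k u_k² − (∑_{k=1}^d σ(θ)_k u_k)² > 1/2 − ε. Consequently, for any probability vector p, the ℓ2-smoothness constant of f(θ) = KL(p‖σ(θ)) (the supremum over θ and unit u of the Hessian quadratic form uᵀ∇²f(θ)u) is at least 1/2. -/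
lemma softmax_aux_key (dR ε E : ℝ) (hd2 : 2 ≤ dR) (hε : 0 < ε)
    (hEε : ε * E = dR + ε) (hS : 0 < 2*E + (dR - 2)) :
    1/2 - ε < E / (2*E + (dR - 2)) := by
  rw [sub_lt_iff_lt_add, div_add' _ _ _ (ne_of_gt hS), lt_div_iff₀ hS]
  nlinarith [mul_nonneg hε.le (show (0:ℝ) ≤ dR - 2 by linarith)]

/-- for every `ε > 0` there are `θ` and an ℓ2-unit vector `u` such that the
Hessian quadratic form `∑_k σ(θ)_k u_k² − (∑_k σ(θ)_k u_k)²` exceeds `1/2 − ε`;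
consequently the ℓ2-smoothness constant of `f(θ) = KL(p‖σ(θ))` (the supremum over `θ`
and ℓ2-unit `u` of the quadratic form) is at least `1/2`. -/
theorem softmax_kl_l2_smoothness_lower (d : ℕ) (hd : 2 ≤ d) :
    (∀ ε > (0 : ℝ), ∃ θ u : Fin d → ℝ,
      Real.sqrt (∑ k, (u k) ^ 2) = 1 ∧
      1 / 2 - ε < ∑ k, softmax θ k * (u k) ^ 2 - (∑ k, softmax θ k * u k) ^ 2) ∧
    ∀ M : ℝ,
      (∀ θ u : Fin d → ℝ, Real.sqrt (∑ k, (u k) ^ 2) = 1 →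
        ∑ k, softmax θ k * (u k) ^ 2 - (∑ k, softmax θ k * u k) ^ 2 ≤ M) →
      1 / 2 ≤ M := by
  have h0 : (0:ℕ) < d := by omega
  have h1 : (1:ℕ) < d := by omega
  set i0 : Fin d := ⟨0, h0⟩ with hi0
  set i1 : Fin d := ⟨1, h1⟩ with hi1
  have hne : i0 ≠ i1 := by simp [hi0, hi1, Fin.ext_iff]
  have H : ∀ ε > (0:ℝ), ∃ θ u : Fin d → ℝ,
      Real.sqrt (∑ k, (u k) ^ 2) = 1 ∧
      1 / 2 - ε < ∑ k, softmax θ k * (u k) ^ 2 - (∑ k, softmax θ k * u k) ^ 2 := by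
    intro ε hε
    set s : ℝ := Real.sqrt (1/2) with hsdef
    have hs2 : s^2 = 1/2 := Real.sq_sqrt (by norm_num)
    set E : ℝ := (d:ℝ)/ε + 1 with hEdef
    have hEpos : 0 < E := by positivity
    set t : ℝ := Real.log E with htdef
    have hexp : Real.exp t = E := Real.exp_log hEpos
    set θ : Fin d → ℝ := fun k => if k = i0 ∨ k = i1 then t else 0 with hθ
    set u : Fin d → ℝ := fun k => (if k = i0 then s else 0) + (if k = i1 then -s else 0) with hu
    have hS : ∑ j, Real.exp (θ j) = 2*E + ((d:ℝ) - 2) := by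
      have hpt : ∀ j : Fin d, Real.exp (θ j)
          = 1 + ((if j = i0 then E - 1 else 0) + (if j = i1 then E - 1 else 0)) := by
        intro j
        rcases eq_or_ne j i0 with h|h <;> rcases eq_or_ne j i1 with h'|h'
        · exact absurd (h ▸ h') hne
        · simp [hθ, h, h', hexp, hne, hne.symm]
        · simp [hθ, h, h', hexp, hne, hne.symm]
        · simp [hθ, h, h']
      rw [Finset.sum_congr rfl fun j _ => hpt j]
      simp [Finset.sum_add_distrib, Finset.sum_ite_eq', Finset.card_univ]
      ring
    have hSpos : 0 < ∑ j, Real.exp (θ j) := by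
      rw [hS]; have : (2:ℝ) ≤ (d:ℝ) := by exact_mod_cast hd
      nlinarith
    have hσ0 : softmax θ i0 = E / (2*E + ((d:ℝ) - 2)) := by
      simp only [softmax]; rw [hS]; simp [hθ, hexp]
    have hσ1 : softmax θ i1 = E / (2*E + ((d:ℝ) - 2)) := by
      simp only [softmax]; rw [hS]; simp [hθ, hexp, hne.symm]
    refine ⟨θ, u, ?_, ?_⟩
    · have : ∑ k, (u k)^2 = 1 := by
        have hpt : ∀ k : Fin d, (u k)^2
            = (if k = i0 then s^2 else 0) + (if k = i1 then s^2 else 0) := by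
          intro k
          rcases eq_or_ne k i0 with h|h <;> rcases eq_or_ne k i1 with h'|h'
          · exact absurd (h ▸ h') hne
          · simp [hu, h, h', hne, hne.symm]
          · simp [hu, h, h', hne, hne.symm]
          · simp [hu, h, h', hne, hne.symm]
        rw [Finset.sum_congr rfl fun k _ => hpt k]
        simp [Finset.sum_add_distrib, Finset.sum_ite_eq', hs2]
        norm_num
      rw [this, Real.sqrt_one]
    · have hB : ∑ k, softmax θ k * (u k)^2
          = softmax θ i0 * s^2 + softmax θ i1 * s^2 := by
        have hpt : ∀ k : Fin d, softmax θ k * (u k)^2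
            = (if k = i0 then softmax θ i0 * s^2 else 0)
              + (if k = i1 then softmax θ i1 * s^2 else 0) := by
          intro k
          rcases eq_or_ne k i0 with h|h <;> rcases eq_or_ne k i1 with h'|h'
          · exact absurd (h ▸ h') hne
          · simp [hu, h, h', hne, hne.symm]
          · simp [hu, h, h', hne, hne.symm]
          · simp [hu, h, h', hne, hne.symm]
        rw [Finset.sum_congr rfl fun k _ => hpt k]
        simp [Finset.sum_add_distrib, Finset.sum_ite_eq']
      have hC : ∑ k, softmax θ k * u k
          = softmax θ i0 * s - softmax θ i1 * s := by
        have hpt : ∀ k : Fin d, softmax θ k * u k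
            = (if k = i0 then softmax θ i0 * s else 0)
              + (if k = i1 then -(softmax θ i1 * s) else 0) := by
          intro k
          rcases eq_or_ne k i0 with h|h <;> rcases eq_or_ne k i1 with h'|h'
          · exact absurd (h ▸ h') hne
          · simp [hu, h, h', hne, hne.symm]
          · simp [hu, h, h', hne, hne.symm]
          · simp [hu, h, h', hne, hne.symm]
        rw [Finset.sum_congr rfl fun k _ => hpt k]
        simp [Finset.sum_add_distrib, Finset.sum_ite_eq']
        ring
      rw [hB, hC, hσ0, hσ1]
      have hd2 : (2:ℝ) ≤ (d:ℝ) := by exact_mod_cast hd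
      have hSpos' : 0 < 2*E + ((d:ℝ) - 2) := by nlinarith
      have hEε : ε * E = (d:ℝ) + ε := by
        rw [hEdef]; field_simp
      have key : 1/2 - ε < E / (2*E + ((d:ℝ) - 2)) :=
        softmax_aux_key _ _ _ hd2 hε hEε hSpos'
      calc 1/2 - ε < E / (2*E + ((d:ℝ) - 2)) := key
        _ = E / (2*E + ((d:ℝ) - 2)) * s^2 + E / (2*E + ((d:ℝ) - 2)) * s^2
            - (E / (2*E + ((d:ℝ) - 2)) * s - E / (2*E + ((d:ℝ) - 2)) * s)^2 := by
              rw [hs2]; ring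
  refine ⟨H, ?_⟩
  intro M hM
  by_contra h
  push_neg at h
  obtain ⟨θ, u, hu1, hlt⟩ := H ((1/2 - M)/2) (by linarith)
  have := hM θ u hu1
  linarith
end

section
/- Fix d ≥ 2, let H_d = ∑_{j=1}^d 1/j, p_k = (1/k)/H_d, and f(θ) = KL(p‖σ(θ)). Run sign descent with weight decay starting at θ₀ = 0 with λ = 2/log(d) and η_t = 2/(λ(t+1)): θ_{t+1} = (1 − λη_t)θ_t − η_t Δ_t, where ‖Δ_t‖_∞ ≤ 1 and ⟨∇f(θ_t), Δ_t⟩ = ‖∇f(θ_t)‖₁. Then for every T ≥ 1, f(θ_T) − min f ≤ 2(log d)² / (T + 2). -/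
/-- The gradient of `f : ℝ^d → ℝ` (vector of partial derivatives). -/
noncomputable def grad {d : ℕ} (f : (Fin d → ℝ) → ℝ) (θ : Fin d → ℝ) : Fin d → ℝ :=
  fun k => fderiv ℝ f θ (Pi.single k 1)

/-- The ℓ1 norm on `ℝ^d`. -/
noncomputable def l1norm {d : ℕ} (x : Fin d → ℝ) : ℝ := ∑ k, |x k|

section Aux
open Real Finset


open Real Finset

variable {d : ℕ}

-- 1D core lemma
lemma one_dim (hd : 0 < d) (c v : Fin d → ℝ) (hc : ∀ j, 0 < c j) (M : ℝ)
    (hM : ∀ j, v j ^ 2 ≤ M) :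
    Real.log (∑ j, c j * Real.exp (v j)) ≤
      Real.log (∑ j, c j) + (∑ j, c j * v j) / (∑ j, c j) + M / 2 ∧
    Real.log (∑ j, c j) + (∑ j, c j * v j) / (∑ j, c j) ≤
      Real.log (∑ j, c j * Real.exp (v j)) := by
  have hne : (Finset.univ : Finset (Fin d)).Nonempty := univ_nonempty_iff.2 (Fin.pos_iff_nonempty.1 hd)
  set F : ℝ → ℝ := fun t => ∑ j, c j * Real.exp (v j * t) with hFdef
  set G : ℝ → ℝ := fun t => ∑ j, c j * v j * Real.exp (v j * t) with hGdef
  set K : ℝ → ℝ := fun t => ∑ j, c j * v j ^ 2 * Real.exp (v j * t) with hKdef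
  have hFpos : ∀ t, 0 < F t := fun t =>
    Finset.sum_pos (fun j _ => mul_pos (hc j) (Real.exp_pos _)) hne
  have hF : ∀ t, HasDerivAt F (G t) t := by
    intro t
    have : HasDerivAt F (∑ j, c j * (Real.exp (v j * t) * v j)) t := by
      apply HasDerivAt.fun_sum
      intro j _
      simpa using (((hasDerivAt_id t).const_mul (v j)).exp).const_mul (c j)
    convert this using 1
    apply Finset.sum_congr rfl; intro j _; ring
  have hG : ∀ t, HasDerivAt G (K t) t := by
    intro t
    have : HasDerivAt G (∑ j, c j * v j * (Real.exp (v j * t) * v j)) t := by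
      apply HasDerivAt.fun_sum
      intro j _
      simpa using (((hasDerivAt_id t).const_mul (v j)).exp).const_mul (c j * v j)
    convert this using 1
    apply Finset.sum_congr rfl; intro j _; ring
  have hKF : ∀ t, K t ≤ M * F t := by
    intro t
    rw [hKdef, hFdef, Finset.mul_sum]
    apply Finset.sum_le_sum
    intro j _
    have := hM j
    have he := (Real.exp_pos (v j * t)).le
    nlinarith [mul_nonneg (mul_nonneg (hc j).le (sub_nonneg.2 (hM j))) (Real.exp_pos (v j * t)).le]
  have hCS : ∀ t, (G t) ^ 2 ≤ K t * F t := by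
    intro t
    have h := Finset.sum_mul_sq_le_sq_mul_sq Finset.univ
      (fun j => Real.sqrt (c j * Real.exp (v j * t)) * v j)
      (fun j => Real.sqrt (c j * Real.exp (v j * t)))
    have hx : ∀ j : Fin d, (0:ℝ) ≤ c j * Real.exp (v j * t) :=
      fun j => mul_nonneg (hc j).le (Real.exp_pos _).le
    have hsq : ∀ j : Fin d, Real.sqrt (c j * Real.exp (v j * t)) ^ 2 = c j * Real.exp (v j * t) := by
      intro j
      exact Real.sq_sqrt (hx j)
    calc (G t)^2 = (∑ j, Real.sqrt (c j * Real.exp (v j * t)) * v j * Real.sqrt (c j * Real.exp (v j * t)))^2 := by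
          congr 1
          apply Finset.sum_congr rfl
          intro j _
          linear_combination (-(v j)) * hsq j
      _ ≤ (∑ j, (Real.sqrt (c j * Real.exp (v j * t)) * v j)^2) * ∑ j, Real.sqrt (c j * Real.exp (v j * t))^2 := h
      _ = K t * F t := by
          congr 1
          · apply Finset.sum_congr rfl; intro j _; rw [mul_pow, hsq]; ring
          · apply Finset.sum_congr rfl; intro j _; rw [hsq]
  have hψ : ∀ t : ℝ, HasDerivAt (fun t => G t / F t)
      ((K t * F t - G t * G t) / F t ^ 2) t :=
    fun t => (hG t).div (hF t) (hFpos t).ne'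
  have hψmono : Monotone (fun t => G t / F t) := by
    apply monotone_of_deriv_nonneg
    · exact fun t => ((hψ t).differentiableAt)
    · intro t
      rw [(hψ t).deriv]
      apply div_nonneg _ (sq_nonneg _)
      have := hCS t
      nlinarith
  have hωmono : Monotone (fun t => M * t - G t / F t) := by
    apply monotone_of_deriv_nonneg
    · exact fun t => (differentiable_id.const_mul M t).sub (hψ t).differentiableAt
    · intro t
      have hd1 : HasDerivAt (fun t => M * t - G t / F t)
          (M - (K t * F t - G t * G t) / F t ^ 2) t :=
        ((hasDerivAt_id t).const_mul M |>.congr_deriv (mul_one M)).sub (hψ t)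
      rw [hd1.deriv]
      have hF2 : (0:ℝ) < F t ^ 2 := pow_pos (hFpos t) 2
      rw [sub_nonneg, div_le_iff₀ hF2]
      have := hKF t
      nlinarith [sq_nonneg (G t), (hFpos t).le]
  -- evaluate endpoints
  have hF0 : F 0 = ∑ j, c j := by
    simp [hFdef]
  have hF1 : F 1 = ∑ j, c j * Real.exp (v j) := by
    simp [hFdef]
  have hG0 : G 0 = ∑ j, c j * v j := by
    simp [hGdef]
  constructor
  · -- upper bound via χ t = M t²/2 + ψ0 t - log F t  monotone on [0,∞)
    have hχ : ∀ t : ℝ, HasDerivAt (fun t => M * t ^ 2 / 2 + (G 0 / F 0) * t - Real.log (F t))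
        (M * t + G 0 / F 0 - G t / F t) t := by
      intro t
      have h1 : HasDerivAt (fun t : ℝ => M * t ^ 2 / 2) (M * t) t := by
        have := ((hasDerivAt_pow 2 t).const_mul M).div_const 2
        simpa using this.congr_deriv (by ring)
      have h2 : HasDerivAt (fun t : ℝ => (G 0 / F 0) * t) (G 0 / F 0) t :=
        ((hasDerivAt_id t).const_mul (G 0 / F 0)).congr_deriv (mul_one _)
      have h3 : HasDerivAt (fun t => Real.log (F t)) (G t / F t) t :=
        (hF t).log (hFpos t).ne'
      exact (h1.add h2).sub h3
    have hmono : MonotoneOn (fun t => M * t ^ 2 / 2 + (G 0 / F 0) * t - Real.log (F t))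
        (Set.Ici (0:ℝ)) := by
      apply monotoneOn_of_deriv_nonneg (convex_Ici 0)
      · exact Continuous.continuousOn
          (Differentiable.continuous (fun t => (hχ t).differentiableAt))
      · intro t _
        exact (hχ t).differentiableAt.differentiableWithinAt
      · intro t ht
        rw [(hχ t).deriv]
        have := hωmono (le_of_lt (by simpa using ht) : (0:ℝ) ≤ t)
        simp only at this
        have h0 : M * 0 - G 0 / F 0 ≤ M * t - G t / F t := this
        linarith
    have := hmono (Set.self_mem_Ici) (by norm_num : (1:ℝ) ∈ Set.Ici (0:ℝ)) zero_le_one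
    simp only at this
    rw [hF0, hF1, hG0] at this
    simp at this
    linarith [this]
  · -- lower bound via ρ t = log F t - ψ0 t monotone on [0,∞)
    have hρ : ∀ t : ℝ, HasDerivAt (fun t => Real.log (F t) - (G 0 / F 0) * t)
        (G t / F t - G 0 / F 0) t := by
      intro t
      have h3 : HasDerivAt (fun t => Real.log (F t)) (G t / F t) t :=
        (hF t).log (hFpos t).ne'
      have h2 : HasDerivAt (fun t : ℝ => (G 0 / F 0) * t) (G 0 / F 0) t :=
        ((hasDerivAt_id t).const_mul (G 0 / F 0)).congr_deriv (mul_one _)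
      exact h3.sub h2
    have hmono : MonotoneOn (fun t => Real.log (F t) - (G 0 / F 0) * t) (Set.Ici (0:ℝ)) := by
      apply monotoneOn_of_deriv_nonneg (convex_Ici 0)
      · exact Continuous.continuousOn
          (Differentiable.continuous (fun t => (hρ t).differentiableAt))
      · intro t _
        exact (hρ t).differentiableAt.differentiableWithinAt
      · intro t ht
        rw [(hρ t).deriv]
        have := hψmono (le_of_lt (by simpa using ht) : (0:ℝ) ≤ t)
        simp only at this
        linarith [this]
    have := hmono (Set.self_mem_Ici) (by norm_num : (1:ℝ) ∈ Set.Ici (0:ℝ)) zero_le_one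
    simp only at this
    rw [hF0, hF1, hG0] at this
    simp at this
    linarith [this]

section Setup

variable (d : ℕ) (hd : 2 ≤ d) (H : ℝ) (p : Fin d → ℝ) (f : (Fin d → ℝ) → ℝ)

lemma Hpos (hH : H = ∑ j : Fin d, (1 : ℝ) / ((j : ℕ) + 1)) (hd : 2 ≤ d) : 0 < H := by
  have hne : (Finset.univ : Finset (Fin d)).Nonempty := by
    rw [univ_nonempty_iff]
    exact Fin.pos_iff_nonempty.1 (by omega)
  rw [hH]
  exact Finset.sum_pos (fun j _ => by positivity) hne

lemma p_pos (hH : H = ∑ j : Fin d, (1 : ℝ) / ((j : ℕ) + 1)) (hd : 2 ≤ d)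
    (hp : ∀ k, p k = ((1 : ℝ) / ((k : ℕ) + 1)) / H) : ∀ k, 0 < p k := by
  intro k
  rw [hp k]
  have := Hpos d H hH hd
  positivity

lemma p_sum (hH : H = ∑ j : Fin d, (1 : ℝ) / ((j : ℕ) + 1)) (hd : 2 ≤ d)
    (hp : ∀ k, p k = ((1 : ℝ) / ((k : ℕ) + 1)) / H) : ∑ k, p k = 1 := by
  have h0 := Hpos d H hH hd
  have : ∑ k, p k = (∑ k : Fin d, (1 : ℝ) / ((k : ℕ) + 1)) / H := by
    rw [Finset.sum_div]
    exact Finset.sum_congr rfl fun k _ => hp k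
  rw [this, ← hH, div_self h0.ne']

lemma sumexp_pos (hd : 2 ≤ d) (x : Fin d → ℝ) : 0 < ∑ j, Real.exp (x j) := by
  have hne : (Finset.univ : Finset (Fin d)).Nonempty := by
    rw [univ_nonempty_iff]
    exact Fin.pos_iff_nonempty.1 (by omega)
  exact Finset.sum_pos (fun j _ => Real.exp_pos _) hne

lemma softmax_pos (hd : 2 ≤ d) (x : Fin d → ℝ) (k : Fin d) : 0 < softmax x k :=
  div_pos (Real.exp_pos _) (sumexp_pos d hd x)

lemma f_eq (hd : 2 ≤ d)
    (hH : H = ∑ j : Fin d, (1 : ℝ) / ((j : ℕ) + 1))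
    (hp : ∀ k, p k = ((1 : ℝ) / ((k : ℕ) + 1)) / H)
    (hf : f = fun θ => ∑ k, p k * Real.log (p k / softmax θ k)) :
    ∀ x : Fin d → ℝ, f x = (∑ k, p k * Real.log (p k)) - (∑ k, p k * x k)
      + Real.log (∑ j, Real.exp (x j)) := by
  intro x
  have hS := sumexp_pos d hd x
  have hpp := p_pos d H p hH hd hp
  have hterm : ∀ k : Fin d, p k * Real.log (p k / softmax x k)
      = p k * Real.log (p k) - p k * x k + p k * Real.log (∑ j, Real.exp (x j)) := by
    intro k
    have hσ : softmax x k = Real.exp (x k) / ∑ j, Real.exp (x j) := rfl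
    rw [hσ, Real.log_div (hpp k).ne' (by positivity), Real.log_div (Real.exp_pos _).ne' hS.ne',
      Real.log_exp]
    ring
  rw [hf]
  simp only [hterm]
  rw [Finset.sum_add_distrib, Finset.sum_sub_distrib, ← Finset.sum_mul,
    p_sum d H p hH hd hp, one_mul]

lemma hasFDerivAt_f (hd : 2 ≤ d)
    (hH : H = ∑ j : Fin d, (1 : ℝ) / ((j : ℕ) + 1))
    (hp : ∀ k, p k = ((1 : ℝ) / ((k : ℕ) + 1)) / H)
    (hf : f = fun θ => ∑ k, p k * Real.log (p k / softmax θ k)) (x : Fin d → ℝ) :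
    HasFDerivAt f
      ((0 : (Fin d → ℝ) →L[ℝ] ℝ) - (∑ k, p k • ContinuousLinearMap.proj k)
        + (∑ j, Real.exp (x j))⁻¹ •
          (∑ j, Real.exp (x j) • (ContinuousLinearMap.proj j : (Fin d → ℝ) →L[ℝ] ℝ))) x := by
  have hS := sumexp_pos d hd x
  have key : HasFDerivAt (fun y : Fin d → ℝ => (∑ k, p k * Real.log (p k)) - (∑ k, p k * y k)
      + Real.log (∑ j, Real.exp (y j)))
      ((0 : (Fin d → ℝ) →L[ℝ] ℝ) - (∑ k, p k • ContinuousLinearMap.proj k)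
        + (∑ j, Real.exp (x j))⁻¹ •
          (∑ j, Real.exp (x j) • (ContinuousLinearMap.proj j : (Fin d → ℝ) →L[ℝ] ℝ))) x := by
    apply HasFDerivAt.add
    · apply HasFDerivAt.sub (hasFDerivAt_const _ _)
      have : HasFDerivAt (fun y : Fin d → ℝ => ∑ k, p k * y k)
          (∑ k, p k • (ContinuousLinearMap.proj k : (Fin d → ℝ) →L[ℝ] ℝ)) x := by
        apply HasFDerivAt.fun_sum
        intro k _
        simpa using ((ContinuousLinearMap.proj k : (Fin d → ℝ) →L[ℝ] ℝ).hasFDerivAt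
          (x := x)).const_mul (p k)
      exact this
    · have hin : HasFDerivAt (fun y : Fin d → ℝ => ∑ j, Real.exp (y j))
          (∑ j, Real.exp (x j) • (ContinuousLinearMap.proj j : (Fin d → ℝ) →L[ℝ] ℝ)) x := by
        apply HasFDerivAt.fun_sum
        intro j _
        exact (Real.hasDerivAt_exp (x j)).comp_hasFDerivAt x
          ((ContinuousLinearMap.proj j : (Fin d → ℝ) →L[ℝ] ℝ).hasFDerivAt)
      have hlog := (Real.hasDerivAt_log hS.ne').comp_hasFDerivAt x hin
      exact hlog
  have hfe : f = fun y : Fin d → ℝ => (∑ k, p k * Real.log (p k)) - (∑ k, p k * y k)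
      + Real.log (∑ j, Real.exp (y j)) := funext (f_eq d H p f hd hH hp hf)
  rw [hfe]
  exact key

lemma grad_f (hd : 2 ≤ d)
    (hH : H = ∑ j : Fin d, (1 : ℝ) / ((j : ℕ) + 1))
    (hp : ∀ k, p k = ((1 : ℝ) / ((k : ℕ) + 1)) / H)
    (hf : f = fun θ => ∑ k, p k * Real.log (p k / softmax θ k)) (x : Fin d → ℝ) :
    grad f x = fun k => softmax x k - p k := by
  funext k
  have h := (hasFDerivAt_f d H p f hd hH hp hf x).fderiv
  rw [grad, h]
  have hS := sumexp_pos d hd x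
  simp only [ContinuousLinearMap.add_apply, ContinuousLinearMap.sub_apply,
    ContinuousLinearMap.zero_apply, ContinuousLinearMap.smul_apply,
    ContinuousLinearMap.sum_apply, ContinuousLinearMap.proj_apply, smul_eq_mul]
  simp only [Pi.single_apply, mul_ite, mul_one, mul_zero, Finset.sum_ite_eq',
    Finset.mem_univ, if_true]
  simp only [softmax, div_eq_inv_mul]
  ring

lemma breg (hd : 2 ≤ d)
    (hH : H = ∑ j : Fin d, (1 : ℝ) / ((j : ℕ) + 1))
    (hp : ∀ k, p k = ((1 : ℝ) / ((k : ℕ) + 1)) / H)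
    (hf : f = fun θ => ∑ k, p k * Real.log (p k / softmax θ k)) (x y : Fin d → ℝ) :
    f y ≤ f x + (∑ k, (softmax x k - p k) * (y k - x k)) + ‖y - x‖ ^ 2 / 2 ∧
    f x + (∑ k, (softmax x k - p k) * (y k - x k)) ≤ f y := by
  have hS := sumexp_pos d hd x
  have hfe := f_eq d H p f hd hH hp hf
  have hM : ∀ j : Fin d, (y j - x j) ^ 2 ≤ ‖y - x‖ ^ 2 := by
    intro j
    have h1 : |y j - x j| ≤ ‖y - x‖ := by
      have := norm_le_pi_norm (y - x) j
      simpa [Real.norm_eq_abs] using this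
    calc (y j - x j) ^ 2 = |y j - x j| ^ 2 := (sq_abs _).symm
      _ ≤ ‖y - x‖ ^ 2 := pow_le_pow_left₀ (abs_nonneg _) h1 2
  have hone := one_dim (show 0 < d by omega) (fun j => Real.exp (x j)) (fun j => y j - x j)
    (fun j => Real.exp_pos _) (‖y - x‖ ^ 2) hM
  have he : ∀ j : Fin d, Real.exp (x j) * Real.exp (y j - x j) = Real.exp (y j) := by
    intro j
    rw [← Real.exp_add]
    ring_nf
  rw [Finset.sum_congr rfl (fun j _ => he j)] at hone
  have hσ : (∑ k, (softmax x k - p k) * (y k - x k))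
      = (∑ j, Real.exp (x j) * (y j - x j)) / (∑ j, Real.exp (x j))
        - ∑ k, p k * (y k - x k) := by
    rw [Finset.sum_div, ← Finset.sum_sub_distrib]
    apply Finset.sum_congr rfl
    intro k _
    simp only [softmax]
    field_simp
  have hsplit : ∀ k : Fin d, p k * (y k - x k) = p k * y k - p k * x k := fun k => by ring
  have hys : ∑ k, p k * (y k - x k) = (∑ k, p k * y k) - ∑ k, p k * x k := by
    rw [Finset.sum_congr rfl (fun k _ => hsplit k), Finset.sum_sub_distrib]
  constructor
  · rw [hfe x, hfe y, hσ, hys]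
    have h1 := hone.1
    linarith
  · rw [hfe x, hfe y, hσ, hys]
    have h2 := hone.2
    linarith

end Setup

lemma holder {d : ℕ} (g ξ : Fin d → ℝ) (r : ℝ) (hr : ‖ξ‖ ≤ r) :
    |∑ k, g k * ξ k| ≤ r * l1norm g := by
  calc |∑ k, g k * ξ k| ≤ ∑ k, |g k * ξ k| := Finset.abs_sum_le_sum_abs _ _
    _ = ∑ k, |g k| * |ξ k| := by simp [abs_mul]
    _ ≤ ∑ k, |g k| * r := by
        apply Finset.sum_le_sum
        intro k _
        apply mul_le_mul_of_nonneg_left _ (abs_nonneg _)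
        calc |ξ k| ≤ ‖ξ‖ := by simpa [Real.norm_eq_abs] using norm_le_pi_norm ξ k
          _ ≤ r := hr
    _ = r * l1norm g := by rw [l1norm, ← Finset.sum_mul]; ring

lemma sum_lin {d : ℕ} (a b : ℝ) (u w gg : Fin d → ℝ) :
    ∑ k, gg k * (a * u k + b * w k) = a * (∑ k, gg k * u k) + b * (∑ k, gg k * w k) := by
  rw [Finset.mul_sum, Finset.mul_sum, ← Finset.sum_add_distrib]
  apply Finset.sum_congr rfl
  intros; ring


end Aux

open Real Finset in
set_option maxHeartbeats 2000000 in
/-- sign descent with weight decay `λ = 2/log d` and `η_t = 2/(λ(t+1))`,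
started at `θ₀ = 0`, on the softmax unigram loss `f(θ) = KL(p‖σ(θ))` with heavy-tailed
`p_k = (1/k)/H_d`, satisfies `f(θ_T) − min f ≤ 2(log d)²/(T+2)` for all `T ≥ 1`.
(The norm on `Fin d → ℝ` is the sup norm, so `‖Δ_t‖ ≤ 1` is the ℓ∞ constraint.) -/
theorem sign_descent_wd_softmax_unigram (d : ℕ) (hd : 2 ≤ d)
    (H : ℝ) (hH : H = ∑ j : Fin d, (1 : ℝ) / ((j : ℕ) + 1))
    (p : Fin d → ℝ) (hp : ∀ k, p k = ((1 : ℝ) / ((k : ℕ) + 1)) / H)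
    (f : (Fin d → ℝ) → ℝ)
    (hf : f = fun θ => ∑ k, p k * Real.log (p k / softmax θ k))
    (lam : ℝ) (hlam : lam = 2 / Real.log d)
    (η : ℕ → ℝ) (hη : ∀ t : ℕ, η t = 2 / (lam * ((t : ℝ) + 1)))
    (θ Δ : ℕ → Fin d → ℝ) (hθ0 : θ 0 = 0)
    (hΔnorm : ∀ t, ‖Δ t‖ ≤ 1)
    (hΔdir : ∀ t, (∑ k, grad f (θ t) k * Δ t k) = l1norm (grad f (θ t)))
    (hupdate : ∀ t, θ (t + 1) = (1 - lam * η t) • θ t - η t • Δ t) :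
    ∀ T : ℕ, 1 ≤ T →
      f (θ T) - (⨅ ξ : Fin d → ℝ, f ξ) ≤ 2 * (Real.log d) ^ 2 / ((T : ℝ) + 2) := by
  have hL : (0:ℝ) < Real.log d := Real.log_pos (by exact_mod_cast hd : (1:ℝ) < d)
  set L : ℝ := Real.log d with hLdef
  set r : ℝ := L / 2 with hrdef
  have hr0 : 0 < r := by positivity
  -- gradient formula
  have hgrad : ∀ x, grad f x = fun k => softmax x k - p k :=
    fun x => grad_f d H p f hd hH hp hf x
  have hup : ∀ x y, f y ≤ f x + (∑ k, (softmax x k - p k) * (y k - x k)) + ‖y - x‖ ^ 2 / 2 :=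
    fun x y => (breg d H p f hd hH hp hf x y).1
  have hlo : ∀ x y, f x + (∑ k, (softmax x k - p k) * (y k - x k)) ≤ f y :=
    fun x y => (breg d H p f hd hH hp hf x y).2
  -- the minimizer
  set θs : Fin d → ℝ := fun k => r - Real.log ((k : ℕ) + 1) with hθsdef
  have hHpos := Hpos d H hH hd
  have hexpθs : ∀ k : Fin d, Real.exp (θs k) = Real.exp r * (((k:ℕ):ℝ) + 1)⁻¹ := by
    intro k
    rw [hθsdef]
    rw [Real.exp_sub, Real.exp_log (by positivity)]
    rw [div_eq_mul_inv]
  have hσs : ∀ k, softmax θs k = p k := by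
    intro k
    rw [softmax, Finset.sum_congr rfl (fun j _ => hexpθs j), ← Finset.mul_sum, hexpθs, hp k]
    rw [show (∑ j : Fin d, (((j:ℕ):ℝ) + 1)⁻¹) = H by
      rw [hH]; exact Finset.sum_congr rfl fun j _ => (one_div _).symm]
    rw [one_div]
    rw [div_eq_div_iff (by positivity) (by positivity)]
    ring
  have hmin : ∀ ξ, f θs ≤ f ξ := by
    intro ξ
    have := hlo θs ξ
    have hz : (∑ k, (softmax θs k - p k) * (ξ k - θs k)) = 0 := by
      apply Finset.sum_eq_zero
      intro k _
      rw [hσs k]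
      ring
    rw [hz] at this
    linarith
  have hinf : (⨅ ξ : Fin d → ℝ, f ξ) = f θs :=
    le_antisymm (ciInf_le ⟨f θs, by rintro _ ⟨ξ, rfl⟩; exact hmin ξ⟩ θs) (le_ciInf hmin)
  have hθsnorm : ‖θs‖ ≤ r := by
    apply pi_norm_le_iff_of_nonneg hr0.le |>.2
    intro k
    rw [Real.norm_eq_abs, abs_le]
    have hk1 : (1:ℝ) ≤ ((k:ℕ):ℝ) + 1 := by
      have : (0:ℝ) ≤ ((k:ℕ):ℝ) := Nat.cast_nonneg _
      linarith
    have hkd : ((k:ℕ):ℝ) + 1 ≤ (d:ℝ) := by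
      have := k.isLt
      exact_mod_cast Nat.succ_le_of_lt this
    have h1 : 0 ≤ Real.log (((k:ℕ):ℝ) + 1) := Real.log_nonneg hk1
    have h2 : Real.log (((k:ℕ):ℝ) + 1) ≤ L := by
      rw [hLdef]
      exact Real.log_le_log (by positivity) hkd
    constructor
    · rw [hθsdef]; simp only; rw [hrdef]; linarith
    · rw [hθsdef]; simp only; rw [hrdef]; linarith
  -- step sizes
  have hηt : ∀ t : ℕ, η t = L / ((t:ℝ) + 1) := by
    intro t
    rw [hη t, hlam]
    have ht1 : (0:ℝ) < (t:ℝ) + 1 := by positivity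
    field_simp
  have hγ : ∀ t : ℕ, lam * η t = 2 / ((t:ℝ) + 1) := by
    intro t
    rw [hη t]
    have ht1 : (0:ℝ) < (t:ℝ) + 1 := by positivity
    have hlam0 : lam ≠ 0 := by rw [hlam]; positivity
    field_simp
  -- pointwise description of update differences
  have hdiff : ∀ t : ℕ, ∀ k, θ (t+1) k - θ t k
      = (-(lam * η t)) * θ t k + (-(η t)) * Δ t k := by
    intro t k
    rw [hupdate t]
    simp [Pi.sub_apply, Pi.smul_apply, smul_eq_mul]
    ring
  -- sum of gradient against update difference
  have hsumdiff : ∀ t : ℕ,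
      (∑ k, (softmax (θ t) k - p k) * (θ (t+1) k - θ t k))
        = (-(lam * η t)) * (∑ k, (softmax (θ t) k - p k) * θ t k)
          + (-(η t)) * l1norm (fun k => softmax (θ t) k - p k) := by
    intro t
    rw [Finset.sum_congr rfl (fun k _ => by rw [hdiff t k])]
    rw [sum_lin]
    congr 1
    congr 1
    have := hΔdir t
    rw [hgrad (θ t)] at this
    exact this
  -- convexity bound: -(∑ g θt) ≤ f θs - f (θ t) + r * l1norm g
  have hconv : ∀ t : ℕ,
      -(∑ k, (softmax (θ t) k - p k) * θ t k)
        ≤ f θs - f (θ t) + r * l1norm (fun k => softmax (θ t) k - p k) := by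
    intro t
    have h1 := hlo (θ t) θs
    have h2 : (∑ k, (softmax (θ t) k - p k) * (θs k - θ t k))
        = (∑ k, (softmax (θ t) k - p k) * θs k) - ∑ k, (softmax (θ t) k - p k) * θ t k := by
      rw [← Finset.sum_sub_distrib]
      apply Finset.sum_congr rfl
      intros; ring
    rw [h2] at h1
    have h3 := holder (fun k => softmax (θ t) k - p k) θs r hθsnorm
    have h4 := neg_le_of_abs_le h3
    linarith
  -- nonnegativity of steps
  have hη0 : ∀ t : ℕ, 0 < η t := by
    intro t
    rw [hηt t]
    positivity
  have hγ0 : ∀ t : ℕ, 0 < lam * η t := by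
    intro t
    rw [hγ t]
    positivity
  -- norm of update
  have hnup : ∀ t : ℕ, ‖θ (t+1)‖ ≤ |1 - lam * η t| * ‖θ t‖ + η t := by
    intro t
    rw [hupdate t]
    calc ‖(1 - lam * η t) • θ t - η t • Δ t‖
        ≤ ‖(1 - lam * η t) • θ t‖ + ‖η t • Δ t‖ := norm_sub_le _ _
      _ = |1 - lam * η t| * ‖θ t‖ + |η t| * ‖Δ t‖ := by
          rw [norm_smul, norm_smul, Real.norm_eq_abs, Real.norm_eq_abs]
      _ ≤ |1 - lam * η t| * ‖θ t‖ + η t := by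
          have h1 := hΔnorm t
          have h2 := (hη0 t).le
          have h3 : |η t| = η t := abs_of_nonneg h2
          rw [h3]
          nlinarith [norm_nonneg (Δ t), abs_nonneg (1 - lam * η t)]
  have hnstep : ∀ t : ℕ, ‖θ (t+1) - θ t‖ ≤ (lam * η t) * ‖θ t‖ + η t := by
    intro t
    have heq : θ (t+1) - θ t = (-(lam * η t)) • θ t + (-(η t)) • Δ t := by
      funext k
      rw [Pi.sub_apply, Pi.add_apply, Pi.smul_apply, Pi.smul_apply, smul_eq_mul, smul_eq_mul]
      exact hdiff t k
    rw [heq]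
    calc ‖(-(lam * η t)) • θ t + (-(η t)) • Δ t‖
        ≤ ‖(-(lam * η t)) • θ t‖ + ‖(-(η t)) • Δ t‖ := norm_add_le _ _
      _ = |lam * η t| * ‖θ t‖ + |η t| * ‖Δ t‖ := by
          rw [norm_smul, norm_smul, Real.norm_eq_abs, Real.norm_eq_abs, abs_neg, abs_neg]
      _ ≤ (lam * η t) * ‖θ t‖ + η t := by
          rw [abs_of_nonneg (hγ0 t).le, abs_of_nonneg (hη0 t).le]
          have h1 := hΔnorm t
          nlinarith [hη0 t]
  have hl1nn : ∀ t : ℕ, 0 ≤ l1norm (fun k => softmax (θ t) k - p k) := by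
    intro t
    rw [l1norm]
    exact Finset.sum_nonneg fun k _ => abs_nonneg _
  -- step 0 : f(θ 1) - f θs ≤ 2 r²
  have hη00 : η 0 = 2 * r := by
    rw [hηt 0]
    push_cast
    rw [hrdef]
    ring
  have hstep0 : f (θ 1) - f θs ≤ 2 * r ^ 2 := by
    have hb := hup (θ 0) (θ 1)
    rw [hsumdiff 0] at hb
    have hz : (∑ k, (softmax (θ 0) k - p k) * θ 0 k) = 0 := by
      apply Finset.sum_eq_zero
      intro k _
      rw [hθ0]
      simp
    have hc := hconv 0
    rw [hz] at hb hc
    have hn0 : ‖θ 0‖ = 0 := by rw [hθ0]; simp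
    have hn : ‖θ 1 - θ 0‖ ≤ 2 * r := by
      have h := hnstep 0
      rw [hη00, hn0, mul_zero, zero_add] at h
      simpa using h
    have hn2 : ‖θ 1 - θ 0‖ ^ 2 ≤ (2*r) ^ 2 :=
      pow_le_pow_left₀ (norm_nonneg _) hn 2
    rw [hη00] at hb
    have hms := hmin (θ 0)
    have hl1 := hl1nn 0
    simp only [neg_zero, mul_zero, zero_add] at hb hc
    nlinarith [hb, hc, hn2, hms, hl1]
  -- ball bound for t ≥ 2
  have hball : ∀ t : ℕ, 2 ≤ t → ‖θ t‖ ≤ r := by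
    intro t ht
    induction t, ht using Nat.le_induction with
    | base =>
        have hγ1 : lam * η 1 = 1 := by
          rw [hγ 1]
          norm_num
        have := hnup 1
        rw [hγ1] at this
        simp only [sub_self, abs_zero, zero_mul, zero_add] at this
        calc ‖θ 2‖ ≤ η 1 := this
          _ = r := by rw [hηt 1]; push_cast; rw [hrdef]; ring
    | succ t ht IH =>
        have hIH := IH
        have hs2 : (2:ℝ) ≤ (t:ℝ) := by exact_mod_cast ht
        have hb := hnup t
        have hγv : lam * η t = 2/((t:ℝ)+1) := hγ t
        have hγle : 2/((t:ℝ)+1) ≤ 1 := by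
          rw [div_le_one (by linarith)]
          linarith
        have habs : |1 - lam * η t| = 1 - 2/((t:ℝ)+1) := by
          rw [hγv, abs_of_nonneg (by linarith)]
        rw [habs, hηt t] at hb
        have hηr : L/((t:ℝ)+1) = (2/((t:ℝ)+1)) * r := by
          rw [hrdef]
          field_simp
        rw [hηr] at hb
        have hγpos : 0 < 2/((t:ℝ)+1) := by positivity
        have h5 : (1 - 2/((t:ℝ)+1)) * ‖θ t‖ ≤ (1 - 2/((t:ℝ)+1)) * r :=
          mul_le_mul_of_nonneg_left hIH (by linarith)
        linarith [hb, h5]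
  -- second iterate bound
  have hstep2 : f (θ 2) - f θs ≤ 2 * r ^ 2 := by
    have hb := hup θs (θ 2)
    have hz : (∑ k, (softmax θs k - p k) * (θ 2 k - θs k)) = 0 := by
      apply Finset.sum_eq_zero
      intro k _
      rw [hσs k]
      ring
    rw [hz] at hb
    have hn : ‖θ 2 - θs‖ ≤ 2 * r := by
      calc ‖θ 2 - θs‖ ≤ ‖θ 2‖ + ‖θs‖ := norm_sub_le _ _
        _ ≤ r + r := add_le_add (hball 2 le_rfl) hθsnorm
        _ = 2 * r := by ring
    have hn2 : ‖θ 2 - θs‖ ^ 2 ≤ (2*r)^2 := pow_le_pow_left₀ (norm_nonneg _) hn 2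
    linarith [hb, hn2]
  -- recursion step for t ≥ 2
  have hstep : ∀ t : ℕ, 2 ≤ t → f (θ (t+1)) - f θs
      ≤ (1 - 2/((t:ℝ)+1)) * (f (θ t) - f θs) + 2 * (2/((t:ℝ)+1))^2 * r^2 := by
    intro t ht
    have hs2 : (2:ℝ) ≤ (t:ℝ) := by exact_mod_cast ht
    set γ : ℝ := 2/((t:ℝ)+1) with hγdef
    have hγpos : 0 < γ := by rw [hγdef]; positivity
    have hb := hup (θ t) (θ (t+1))
    rw [hsumdiff t] at hb
    have hγv : lam * η t = γ := hγ t
    have hηv : η t = γ * r := by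
      rw [hηt t, hγdef, hrdef]
      field_simp
    have hc := hconv t
    have hc2 := mul_le_mul_of_nonneg_left hc hγpos.le
    -- norm bound
    have hn : ‖θ (t+1) - θ t‖ ≤ 2 * γ * r := by
      have h6 := hnstep t
      rw [hγv, hηv] at h6
      have hbl := hball t ht
      have h7 : γ * ‖θ t‖ ≤ γ * r := mul_le_mul_of_nonneg_left hbl hγpos.le
      linarith [h6, h7]
    have hn2 : ‖θ (t+1) - θ t‖ ^ 2 ≤ (2*γ*r)^2 := pow_le_pow_left₀ (norm_nonneg _) hn 2
    rw [hγv, hηv] at hb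
    linarith [hb, hc2, hn2]
  -- induction for T ≥ 2
  have hind : ∀ T : ℕ, 2 ≤ T → f (θ T) - f θs ≤ 8 * r^2 / ((T:ℝ) + 2) := by
    intro T hT
    induction T, hT using Nat.le_induction with
    | base =>
        have : ((2:ℕ):ℝ) + 2 = 4 := by norm_num
        rw [this]
        linarith [hstep2]
    | succ t ht IH =>
        have hIH := IH
        have hs2 : (2:ℝ) ≤ (t:ℝ) := by exact_mod_cast ht
        set s : ℝ := (t:ℝ) with hsdef
        have h1 := hstep t ht
        have hγle : 2/(s+1) ≤ 1 := by
          rw [div_le_one (by linarith)]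
          linarith
        have h2 : (1 - 2/(s+1)) * (f (θ t) - f θs) ≤ (1 - 2/(s+1)) * (8*r^2/(s+2)) :=
          mul_le_mul_of_nonneg_left hIH (by linarith)
        have h3 : (1 - 2/(s+1)) * (8*r^2/(s+2)) + 2*(2/(s+1))^2*r^2 ≤ 8*r^2/(s+3) := by
          have e1 : (1 - 2/(s+1)) * (8*r^2/(s+2)) + 2*(2/(s+1))^2*r^2
              = 8*r^2*((s-1)*(s+1) + (s+2)) / ((s+1)^2*(s+2)) := by
            field_simp
            ring
          rw [e1, div_le_div_iff₀ (by positivity) (by positivity)]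
          nlinarith [sq_nonneg r, hs2]
        have hcast : ((t+1:ℕ):ℝ) + 2 = s + 3 := by push_cast; ring
        rw [hcast]
        linarith
  -- conclusion
  intro T hT
  rw [hinf]
  have h8 : 8 * r^2 = 2 * L^2 := by rw [hrdef]; ring
  rcases Nat.lt_or_ge T 2 with hT2 | hT2
  · have hT1 : T = 1 := by omega
    subst hT1
    have : ((1:ℕ):ℝ) + 2 = 3 := by norm_num
    rw [this]
    have h2r : 2 * r^2 = L^2/2 := by rw [hrdef]; ring
    have := hstep0
    rw [h2r] at this
    nlinarith [sq_nonneg L]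
  · have := hind T hT2
    rw [h8] at this
    exact this
end

section
/- Fix d ≥ 2, let H_d = ∑_{j=1}^d 1/j, p_k = (1/k)/H_d, f(θ) = KL(p‖σ(θ)), and V_d = (1/d)∑_{k=1}^d (log k)² − ((1/d)∑_{k=1}^d log k)². Run normalized gradient descent with weight decay starting at θ₀ = 0 with λ = 1/√(d·V_d) and η_t = 2/(λ(t+1)): θ_{t+1} = (1 − λη_t)θ_t − η_t Δ_t, where ‖Δ_t‖₂ ≤ 1 and ⟨∇f(θ_t), Δ_t⟩ = ‖∇f(θ_t)‖₂. Then for every T ≥ 1, f(θ_T) − min f ≤ 8·d·V_d / (T + 2). -/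
/-- The ℓ2 norm on `ℝ^d`. -/
noncomputable def l2norm {d : ℕ} (x : Fin d → ℝ) : ℝ := Real.sqrt (∑ k, (x k) ^ 2)

/-- `V_d`, the variance of `log k` for `k` uniform on `{1,…,d}`. -/
noncomputable def logVar (d : ℕ) : ℝ :=
  (1 / (d : ℝ)) * ∑ k ∈ Finset.Icc 1 d, (Real.log (k : ℝ)) ^ 2 -
    ((1 / (d : ℝ)) * ∑ k ∈ Finset.Icc 1 d, Real.log (k : ℝ)) ^ 2

namespace NGD
open Real Finset

variable {d : ℕ}

lemma l2norm_nonneg (x : Fin d → ℝ) : 0 ≤ l2norm x := Real.sqrt_nonneg _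

lemma l2norm_sq (x : Fin d → ℝ) : l2norm x ^ 2 = ∑ k, x k ^ 2 :=
  Real.sq_sqrt (Finset.sum_nonneg fun _ _ => sq_nonneg _)

lemma cs_le (x y : Fin d → ℝ) : ∑ k, x k * y k ≤ l2norm x * l2norm y :=
  Real.sum_mul_le_sqrt_mul_sqrt _ _ _

lemma cs_ge (x y : Fin d → ℝ) : -(l2norm x * l2norm y) ≤ ∑ k, x k * y k := by
  have h := cs_le (fun k => -x k) y
  have : l2norm (fun k => -x k) = l2norm x := by
    unfold l2norm; congr 1; exact Finset.sum_congr rfl fun k _ => by ring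
  rw [this] at h
  have h2 : ∑ k, (fun k => -x k) k * y k = -∑ k, x k * y k := by
    rw [← Finset.sum_neg_distrib]; exact Finset.sum_congr rfl fun k _ => by ring
  rw [h2] at h; linarith

lemma l2norm_add_le (x y : Fin d → ℝ) : l2norm (x + y) ≤ l2norm x + l2norm y := by
  have h1 : l2norm (x + y) ^ 2 ≤ (l2norm x + l2norm y) ^ 2 := by
    rw [l2norm_sq]
    have : ∑ k, (x + y) k ^ 2 = (∑ k, x k ^ 2) + 2 * (∑ k, x k * y k) + ∑ k, y k ^ 2 := by
      rw [Finset.mul_sum, ← Finset.sum_add_distrib, ← Finset.sum_add_distrib]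
      exact Finset.sum_congr rfl fun k _ => by simp [Pi.add_apply]; ring
    rw [this]
    have := cs_le x y
    have hx := l2norm_sq x; have hy := l2norm_sq y
    nlinarith
  exact le_of_pow_le_pow_left₀ two_ne_zero (by have := l2norm_nonneg x; have := l2norm_nonneg y; linarith) h1


lemma l2norm_smul (a : ℝ) (x : Fin d → ℝ) : l2norm (a • x) = |a| * l2norm x := by
  unfold l2norm
  have : ∑ k, (a • x) k ^ 2 = a ^ 2 * ∑ k, x k ^ 2 := by
    rw [Finset.mul_sum]; exact Finset.sum_congr rfl fun k _ => by simp [Pi.smul_apply]; ring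
  rw [this, Real.sqrt_mul (sq_nonneg a), Real.sqrt_sq_eq_abs]

lemma l2norm_zero : l2norm (0 : Fin d → ℝ) = 0 := by
  unfold l2norm; simp

lemma l2norm_smul_sub_smul_le (a b : ℝ) (x y : Fin d → ℝ) :
    l2norm (a • x - b • y) ≤ |a| * l2norm x + |b| * l2norm y := by
  have : a • x - b • y = a • x + (-b) • y := by funext k; simp [Pi.smul_apply]; ring
  rw [this]
  calc l2norm (a • x + (-b) • y) ≤ l2norm (a • x) + l2norm ((-b) • y) := l2norm_add_le _ _
  _ = |a| * l2norm x + |b| * l2norm y := by rw [l2norm_smul, l2norm_smul, abs_neg]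


lemma lse_bregman (hd : 0 < d) (x v : Fin d → ℝ) :
    Real.log (∑ k, Real.exp (x k)) + (∑ k, softmax x k * v k) ≤
      Real.log (∑ k, Real.exp (x k + v k)) ∧
    Real.log (∑ k, Real.exp (x k + v k)) ≤
      Real.log (∑ k, Real.exp (x k)) + (∑ k, softmax x k * v k) + (1/2) * ∑ k, v k ^ 2 := by
  haveI : Nonempty (Fin d) := Fin.pos_iff_nonempty.mp hd
  set A : ℝ → ℝ := fun t => ∑ k, Real.exp (x k + t * v k) with hAdef
  set N : ℝ → ℝ := fun t => ∑ k, v k * Real.exp (x k + t * v k) with hNdef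
  set Q : ℝ → ℝ := fun t => ∑ k, v k ^ 2 * Real.exp (x k + t * v k) with hQdef
  set K : ℝ := ∑ k, v k ^ 2 with hKdef
  have hApos : ∀ t, 0 < A t := fun t =>
    Finset.sum_pos (fun k _ => Real.exp_pos _) Finset.univ_nonempty
  have hexp : ∀ (k : Fin d) (t : ℝ), HasDerivAt (fun t => Real.exp (x k + t * v k))
      (v k * Real.exp (x k + t * v k)) t := by
    intro k t
    have h1 : HasDerivAt (fun t : ℝ => x k + t * v k) (v k) t := by
      simpa using ((hasDerivAt_id t).mul_const (v k)).const_add (x k)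
    simpa [mul_comm] using h1.exp
  have hA' : ∀ t, HasDerivAt A (N t) t := fun t =>
    HasDerivAt.fun_sum (fun k _ => hexp k t)
  have hN' : ∀ t, HasDerivAt N (Q t) t := by
    intro t
    have : ∀ k ∈ Finset.univ, HasDerivAt (fun t => v k * Real.exp (x k + t * v k))
        (v k ^ 2 * Real.exp (x k + t * v k)) t := by
      intro k _
      have := (hexp k t).const_mul (v k)
      exact this.congr_deriv (by ring)
    exact HasDerivAt.fun_sum this
  set g : ℝ → ℝ := fun t => Real.log (A t) with hgdef
  have hg' : ∀ t, HasDerivAt g (N t / A t) t := by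
    intro t
    have := (Real.hasDerivAt_log (hApos t).ne').comp t (hA' t)
    rw [div_eq_inv_mul]; exact this
  have hg1' : ∀ t, HasDerivAt (fun t => N t / A t) (Q t / A t - (N t / A t) ^ 2) t := by
    intro t
    have h := (hN' t).div (hA' t) (hApos t).ne'
    refine h.congr_deriv ?_
    field_simp
  have hB0 : ∀ t, 0 ≤ Q t / A t - (N t / A t) ^ 2 := by
    intro t
    have hcs : N t ^ 2 ≤ Q t * A t := by
      have h := Finset.sum_mul_sq_le_sq_mul_sq Finset.univ
        (fun k => v k * Real.sqrt (Real.exp (x k + t * v k)))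
        (fun k => Real.sqrt (Real.exp (x k + t * v k)))
      have e1 : ∀ k : Fin d, v k * Real.sqrt (Real.exp (x k + t * v k)) *
          Real.sqrt (Real.exp (x k + t * v k)) = v k * Real.exp (x k + t * v k) := by
        intro k
        rw [mul_assoc, Real.mul_self_sqrt (Real.exp_pos _).le]
      have e2 : ∀ k : Fin d, (v k * Real.sqrt (Real.exp (x k + t * v k))) ^ 2 =
          v k ^ 2 * Real.exp (x k + t * v k) := by
        intro k
        rw [mul_pow, Real.sq_sqrt (Real.exp_pos _).le]
      have e3 : ∀ k : Fin d, (Real.sqrt (Real.exp (x k + t * v k))) ^ 2 =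
          Real.exp (x k + t * v k) := fun k => Real.sq_sqrt (Real.exp_pos _).le
      simp only [e1, e2, e3] at h
      exact h
    have hA2 : 0 < A t ^ 2 := pow_pos (hApos t) 2
    have : (N t / A t) ^ 2 ≤ Q t / A t := by
      rw [div_pow]
      rw [div_le_div_iff₀ hA2 (hApos t)]
      calc N t ^ 2 * A t ≤ Q t * A t * A t := by nlinarith [hApos t]
      _ = Q t * A t ^ 2 := by ring
    linarith
  have hBK : ∀ t, Q t / A t - (N t / A t) ^ 2 ≤ K := by
    intro t
    have hQle : Q t ≤ K * A t := by
      have : ∀ k ∈ (Finset.univ : Finset (Fin d)), v k ^ 2 * Real.exp (x k + t * v k) ≤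
          v k ^ 2 * A t := by
        intro k _
        apply mul_le_mul_of_nonneg_left _ (sq_nonneg _)
        exact Finset.single_le_sum (f := fun j => Real.exp (x j + t * v j))
          (fun j _ => (Real.exp_pos _).le) (Finset.mem_univ k)
      calc Q t ≤ ∑ k, v k ^ 2 * A t := Finset.sum_le_sum this
      _ = K * A t := by rw [← Finset.sum_mul]
    have : Q t / A t ≤ K := (div_le_iff₀ (hApos t)).mpr hQle
    nlinarith [sq_nonneg (N t / A t)]
  -- upper bound
  have upper : g 1 ≤ g 0 + N 0 / A 0 + K / 2 := by
    set c : ℝ := N 0 / A 0 with hc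
    set φ' : ℝ → ℝ := fun t => c + K * t - N t / A t with hφ'def
    have hφ'' : ∀ t, HasDerivAt φ' (K - (Q t / A t - (N t / A t) ^ 2)) t := by
      intro t
      have h1 : HasDerivAt (fun t : ℝ => c + K * t) K t := by
        simpa using ((hasDerivAt_id t).const_mul K).const_add c
      have := h1.fun_sub (hg1' t)
      convert this using 1
      try ring
    have hmono : Monotone φ' :=
      monotone_of_deriv_nonneg (fun t => (hφ'' t).differentiableAt)
        (fun t => by rw [(hφ'' t).deriv]; linarith [hBK t])
    have hφ'0 : φ' 0 = 0 := by simp [hφ'def, hc]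
    set φ : ℝ → ℝ := fun t => g 0 + t * c + K * t ^ 2 / 2 - g t with hφdef
    have hφ' : ∀ t, HasDerivAt φ (φ' t) t := by
      intro t
      have h1 : HasDerivAt (fun t : ℝ => g 0 + t * c) c t := by
        simpa using ((hasDerivAt_id t).mul_const c).const_add (g 0)
      have h2 : HasDerivAt (fun t : ℝ => K * t ^ 2 / 2) (K * t) t := by
        have := ((hasDerivAt_pow 2 t).const_mul K).div_const 2
        refine this.congr_deriv ?_
        try simp
        try ring
      have := (h1.fun_add h2).fun_sub (hg' t)
      convert this using 1
      try simp [hφ'def, hc]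
      try ring
    have hdiff : Differentiable ℝ φ := fun t => (hφ' t).differentiableAt
    have hmonoOn : MonotoneOn φ (Set.Ici 0) := by
      apply monotoneOn_of_deriv_nonneg (convex_Ici 0) hdiff.continuous.continuousOn
        hdiff.differentiableOn
      intro t ht
      rw [(hφ' t).deriv]
      rw [interior_Ici] at ht
      calc (0:ℝ) = φ' 0 := hφ'0.symm
      _ ≤ φ' t := hmono (le_of_lt ht)
    have h01 : φ 0 ≤ φ 1 := hmonoOn (Set.self_mem_Ici) (by norm_num) zero_le_one
    have hφ0 : φ 0 = 0 := by simp [hφdef]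
    rw [hφ0] at h01
    simp only [hφdef] at h01
    linarith [h01]
  -- lower bound
  have lower : g 0 + N 0 / A 0 ≤ g 1 := by
    set c : ℝ := N 0 / A 0 with hc
    set ψ' : ℝ → ℝ := fun t => N t / A t - c with hψ'def
    have hψ'' : ∀ t, HasDerivAt ψ' (Q t / A t - (N t / A t) ^ 2) t := by
      intro t
      exact (hg1' t).sub_const c
    have hmono : Monotone ψ' :=
      monotone_of_deriv_nonneg (fun t => (hψ'' t).differentiableAt)
        (fun t => by rw [(hψ'' t).deriv]; exact hB0 t)
    have hψ'0 : ψ' 0 = 0 := by simp [hψ'def, hc]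
    set ψ : ℝ → ℝ := fun t => g t - g 0 - t * c with hψdef
    have hψ' : ∀ t, HasDerivAt ψ (ψ' t) t := by
      intro t
      have h1 : HasDerivAt (fun t : ℝ => g t - g 0) (N t / A t) t := (hg' t).sub_const (g 0)
      have := h1.fun_sub ((hasDerivAt_id t).mul_const c)
      refine this.congr_deriv ?_
      simp [hψ'def, hc]
    have hdiff : Differentiable ℝ ψ := fun t => (hψ' t).differentiableAt
    have hmonoOn : MonotoneOn ψ (Set.Ici 0) := by
      apply monotoneOn_of_deriv_nonneg (convex_Ici 0) hdiff.continuous.continuousOn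
        hdiff.differentiableOn
      intro t ht
      rw [(hψ' t).deriv]
      rw [interior_Ici] at ht
      calc (0:ℝ) = ψ' 0 := hψ'0.symm
      _ ≤ ψ' t := hmono (le_of_lt ht)
    have h01 : ψ 0 ≤ ψ 1 := hmonoOn (Set.self_mem_Ici) (by norm_num) zero_le_one
    have hψ0 : ψ 0 = 0 := by simp [hψdef]
    rw [hψ0] at h01
    simp only [hψdef] at h01
    linarith [h01]
  -- translate
  have hA1 : A 1 = ∑ k, Real.exp (x k + v k) := by
    simp [hAdef]
  have hA0 : A 0 = ∑ k, Real.exp (x k) := by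
    simp [hAdef]
  have hsm : N 0 / A 0 = ∑ k, softmax x k * v k := by
    have hN0 : N 0 = ∑ k, v k * Real.exp (x k) := by simp [hNdef]
    rw [hN0, hA0]
    unfold softmax
    rw [eq_comm]
    calc ∑ k, Real.exp (x k) / (∑ j, Real.exp (x j)) * v k
        = ∑ k, (v k * Real.exp (x k)) / ∑ j, Real.exp (x j) :=
          Finset.sum_congr rfl fun k _ => by ring
      _ = (∑ k, v k * Real.exp (x k)) / ∑ j, Real.exp (x j) := by rw [Finset.sum_div]
  constructor
  · rw [← hsm]
    have : g 0 + N 0 / A 0 ≤ g 1 := lower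
    simpa [hgdef, hA0, hA1] using this
  · rw [← hsm]
    have : g 1 ≤ g 0 + N 0 / A 0 + K / 2 := upper
    have hK2 : K / 2 = (1/2) * ∑ k, v k ^ 2 := by rw [hKdef]; ring
    rw [hK2] at this
    simpa [hgdef, hA0, hA1] using this


section FProps

variable {d : ℕ} (hd : 0 < d) (H : ℝ) (hH : H = ∑ j : Fin d, (1 : ℝ) / ((j : ℕ) + 1))
  (p : Fin d → ℝ) (hp : ∀ k, p k = ((1 : ℝ) / ((k : ℕ) + 1)) / H)
  (f : (Fin d → ℝ) → ℝ)
  (hf : f = fun θ => ∑ k, p k * Real.log (p k / softmax θ k))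

include hd hH hp hf

lemma f_decomp (θ : Fin d → ℝ) :
    f θ = (∑ k, p k * Real.log (p k)) - (∑ k, p k * θ k) +
      Real.log (∑ j, Real.exp (θ j)) := by
  haveI : Nonempty (Fin d) := Fin.pos_iff_nonempty.mp hd
  have hHpos : 0 < H := by
    rw [hH]; exact Finset.sum_pos (fun j _ => by positivity) Finset.univ_nonempty
  have hppos : ∀ k, 0 < p k := fun k => by
    rw [hp]; exact div_pos (by positivity) hHpos
  have hS : 0 < ∑ j, Real.exp (θ j) :=
    Finset.sum_pos (fun _ _ => Real.exp_pos _) Finset.univ_nonempty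
  have hpsum : ∑ k, p k = 1 := by
    simp only [hp]
    rw [← Finset.sum_div, ← hH, div_self hHpos.ne']
  rw [hf]
  simp only []
  have hterm : ∀ k : Fin d, p k * Real.log (p k / softmax θ k)
      = p k * Real.log (p k) - p k * θ k + p k * Real.log (∑ j, Real.exp (θ j)) := by
    intro k
    have hsm : softmax θ k = Real.exp (θ k) / ∑ j, Real.exp (θ j) := rfl
    have hsm_pos : 0 < softmax θ k := by rw [hsm]; positivity
    rw [Real.log_div (hppos k).ne' hsm_pos.ne', hsm,
        Real.log_div (Real.exp_pos _).ne' hS.ne', Real.log_exp]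
    ring
  show ∑ k, p k * Real.log (p k / softmax θ k) = _
  rw [Finset.sum_congr rfl (fun k _ => hterm k), Finset.sum_add_distrib,
    Finset.sum_sub_distrib, ← Finset.sum_mul, hpsum, one_mul]

lemma grad_eq (θ : Fin d → ℝ) (k : Fin d) : grad f θ k = softmax θ k - p k := by
  haveI : Nonempty (Fin d) := Fin.pos_iff_nonempty.mp hd
  have hS : 0 < ∑ j, Real.exp (θ j) :=
    Finset.sum_pos (fun _ _ => Real.exp_pos _) Finset.univ_nonempty
  have hfun : f = fun ξ => (∑ k, p k * Real.log (p k)) - (∑ k, p k * ξ k) +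
      Real.log (∑ j, Real.exp (ξ j)) := funext (f_decomp hd H hH p hp f hf)
  have h1 : HasFDerivAt (fun ξ : Fin d → ℝ => ∑ k, p k * ξ k)
      (∑ k : Fin d, p k • ContinuousLinearMap.proj (R := ℝ) (φ := fun _ : Fin d => ℝ) k) θ :=
    HasFDerivAt.fun_sum (fun k _ =>
      (ContinuousLinearMap.proj (R := ℝ) (φ := fun _ : Fin d => ℝ) k).hasFDerivAt.const_mul (p k))
  have hsum : HasFDerivAt (fun ξ : Fin d → ℝ => ∑ j, Real.exp (ξ j))
      (∑ j : Fin d, Real.exp (θ j) • ContinuousLinearMap.proj (R := ℝ) (φ := fun _ : Fin d => ℝ) j) θ :=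
    HasFDerivAt.fun_sum (fun j _ =>
      (Real.hasDerivAt_exp (θ j)).comp_hasFDerivAt (h₂ := Real.exp) θ
        (ContinuousLinearMap.proj (R := ℝ) (φ := fun _ : Fin d => ℝ) j).hasFDerivAt)
  have hlog : HasFDerivAt (fun ξ : Fin d → ℝ => Real.log (∑ j, Real.exp (ξ j)))
      ((∑ j, Real.exp (θ j))⁻¹ •
        ∑ j : Fin d, Real.exp (θ j) • ContinuousLinearMap.proj (R := ℝ) (φ := fun _ : Fin d => ℝ) j) θ :=
    (Real.hasDerivAt_log hS.ne').comp_hasFDerivAt (h₂ := Real.log) θ hsum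
  have htot : HasFDerivAt f
      (0 - (∑ k : Fin d, p k • ContinuousLinearMap.proj (R := ℝ) (φ := fun _ : Fin d => ℝ) k) +
        (∑ j, Real.exp (θ j))⁻¹ •
          ∑ j : Fin d, Real.exp (θ j) • ContinuousLinearMap.proj (R := ℝ) (φ := fun _ : Fin d => ℝ) j) θ := by
    rw [hfun]
    exact ((hasFDerivAt_const _ θ).sub h1).add hlog
  unfold grad
  rw [htot.fderiv]
  simp only [ContinuousLinearMap.add_apply, ContinuousLinearMap.sub_apply,
    ContinuousLinearMap.zero_apply, ContinuousLinearMap.smul_apply,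
    ContinuousLinearMap.sum_apply, ContinuousLinearMap.proj_apply, Pi.single_apply,
    smul_eq_mul, mul_ite, mul_one, mul_zero]
  rw [Finset.sum_ite_eq' Finset.univ k p, Finset.sum_ite_eq' Finset.univ k (fun j => Real.exp (θ j))]
  simp only [Finset.mem_univ, if_true]
  unfold softmax
  rw [div_eq_inv_mul]
  ring

lemma f_bounds (x y : Fin d → ℝ) :
    f x + (∑ k, (softmax x k - p k) * (y k - x k)) ≤ f y ∧
    f y ≤ f x + (∑ k, (softmax x k - p k) * (y k - x k)) +
      (1/2) * ∑ k, (y k - x k)^2 := by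
  have hdx := f_decomp hd H hH p hp f hf x
  have hdy := f_decomp hd H hH p hp f hf y
  obtain ⟨hlow, hup⟩ := lse_bregman hd x (fun k => y k - x k)
  simp only [show ∀ k, x k + (y k - x k) = y k from fun k => by ring] at hlow hup
  have e1 : ∑ k, (softmax x k - p k) * (y k - x k)
      = (∑ k, softmax x k * (y k - x k)) + ((∑ k, p k * x k) - (∑ k, p k * y k)) := by
    rw [Finset.sum_congr rfl (fun k _ =>
      show (softmax x k - p k) * (y k - x k)
        = softmax x k * (y k - x k) + (p k * x k - p k * y k) from by ring),
      Finset.sum_add_distrib, Finset.sum_sub_distrib]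
  constructor
  · rw [hdx, hdy, e1]; linarith
  · rw [hdx, hdy, e1]; linarith

end FProps

section Star

variable {d : ℕ}

lemma sum_sq_star (hd : 2 ≤ d) (m : ℝ)
    (hm : m = (∑ j ∈ Finset.Icc 1 d, Real.log j) / d) :
    ∑ k : Fin d, (m - Real.log ((k : ℕ) + 1)) ^ 2 = d * logVar d := by
  have hd0 : (0:ℝ) < d := by exact_mod_cast Nat.lt_of_lt_of_le two_pos hd
  have h1 : ∑ k : Fin d, (m - Real.log ((k : ℕ) + 1)) ^ 2
      = ∑ i ∈ Finset.range d, (m - Real.log ((i : ℝ) + 1)) ^ 2 :=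
    Fin.sum_univ_eq_sum_range (fun i => (m - Real.log ((i : ℝ) + 1)) ^ 2) d
  have h2 : ∑ i ∈ Finset.range d, (m - Real.log ((i : ℝ) + 1)) ^ 2
      = ∑ j ∈ Finset.Icc 1 d, (m - Real.log j) ^ 2 := by
    rw [show Finset.Icc 1 d = Finset.Ico 1 (d+1) by rw [Finset.Ico_add_one_right_eq_Icc],
      Finset.sum_Ico_eq_sum_range]
    simp only [Nat.add_sub_cancel]
    apply Finset.sum_congr rfl
    intro i _
    congr 2
    push_cast
    ring
  have hcard : (Finset.Icc 1 d).card = d := by rw [Nat.card_Icc]; omega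
  have h3 : ∑ j ∈ Finset.Icc 1 d, (m - Real.log j) ^ 2
      = (∑ j ∈ Finset.Icc 1 d, (Real.log j) ^ 2)
        - 2 * m * (∑ j ∈ Finset.Icc 1 d, Real.log j) + d * m ^ 2 := by
    calc ∑ j ∈ Finset.Icc 1 d, (m - Real.log j) ^ 2
        = ∑ j ∈ Finset.Icc 1 d,
            ((Real.log j) ^ 2 - 2 * m * Real.log j + m ^ 2) :=
          Finset.sum_congr rfl fun j _ => by ring
      _ = _ := by
          rw [Finset.sum_add_distrib, Finset.sum_sub_distrib, ← Finset.mul_sum,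
            Finset.sum_const, hcard]
          push_cast
          ring
  rw [h1, h2, h3]
  unfold logVar
  have hsum : (∑ j ∈ Finset.Icc 1 d, Real.log j) = d * m := by
    rw [hm]; field_simp
  rw [hsum]
  field_simp
  ring

lemma dlogVar_pos (hd : 2 ≤ d) : 0 < d * logVar d := by
  have hd0 : (0:ℝ) < d := by exact_mod_cast Nat.lt_of_lt_of_le two_pos hd
  set m : ℝ := (∑ j ∈ Finset.Icc 1 d, Real.log j) / d with hm
  have key : d * logVar d = ∑ j ∈ Finset.Icc 1 d, (m - Real.log j) ^ 2 := by
    have h1 := sum_sq_star hd m hm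
    -- reuse: d*logVar d = sum over Fin d = sum over Icc
    rw [← h1]
    rw [Fin.sum_univ_eq_sum_range (fun i => (m - Real.log ((i : ℝ) + 1)) ^ 2) d]
    rw [show Finset.Icc 1 d = Finset.Ico 1 (d+1) by rw [Finset.Ico_add_one_right_eq_Icc],
      Finset.sum_Ico_eq_sum_range]
    simp only [Nat.add_sub_cancel]
    apply Finset.sum_congr rfl
    intro i _
    congr 2
    push_cast
    ring
  rw [key]
  have hsub : ({1, 2} : Finset ℕ) ⊆ Finset.Icc 1 d := by
    intro j hj
    simp only [Finset.mem_insert, Finset.mem_singleton] at hj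
    rcases hj with rfl | rfl <;> simp [Finset.mem_Icc] <;> omega
  have hle : ∑ j ∈ ({1, 2} : Finset ℕ), (m - Real.log j) ^ 2
      ≤ ∑ j ∈ Finset.Icc 1 d, (m - Real.log j) ^ 2 :=
    Finset.sum_le_sum_of_subset_of_nonneg hsub (fun j _ _ => sq_nonneg _)
  have h12 : ∑ j ∈ ({1, 2} : Finset ℕ), (m - Real.log j) ^ 2
      = (m - Real.log 1) ^ 2 + (m - Real.log 2) ^ 2 := by
    rw [Finset.sum_insert (by norm_num), Finset.sum_singleton]
    norm_num
  have hlog2 : 0 < Real.log 2 := Real.log_pos one_lt_two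
  have hpos : 0 < (m - Real.log 1) ^ 2 + (m - Real.log 2) ^ 2 := by
    rw [Real.log_one]
    nlinarith [sq_nonneg (2 * m - Real.log 2), sq_nonneg m, sq_nonneg (m - Real.log 2)]
  linarith

end Star

end NGD

set_option maxHeartbeats 3200000 in
/-- normalized gradient descent with weight decay `λ = 1/√(d·V_d)` and
`η_t = 2/(λ(t+1))`, started at `θ₀ = 0`, on the softmax unigram loss `f(θ) = KL(p‖σ(θ))`
with heavy-tailed `p_k = (1/k)/H_d`, satisfies `f(θ_T) − min f ≤ 8·d·V_d/(T+2)` for all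
`T ≥ 1`. -/
theorem norm_gd_wd_softmax_unigram (d : ℕ) (hd : 2 ≤ d)
    (H : ℝ) (hH : H = ∑ j : Fin d, (1 : ℝ) / ((j : ℕ) + 1))
    (p : Fin d → ℝ) (hp : ∀ k, p k = ((1 : ℝ) / ((k : ℕ) + 1)) / H)
    (f : (Fin d → ℝ) → ℝ)
    (hf : f = fun θ => ∑ k, p k * Real.log (p k / softmax θ k))
    (lam : ℝ) (hlam : lam = 1 / Real.sqrt (d * logVar d))
    (η : ℕ → ℝ) (hη : ∀ t : ℕ, η t = 2 / (lam * ((t : ℝ) + 1)))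
    (θ Δ : ℕ → Fin d → ℝ) (hθ0 : θ 0 = 0)
    (hΔnorm : ∀ t, l2norm (Δ t) ≤ 1)
    (hΔdir : ∀ t, (∑ k, grad f (θ t) k * Δ t k) = l2norm (grad f (θ t)))
    (hupdate : ∀ t, θ (t + 1) = (1 - lam * η t) • θ t - η t • Δ t) :
    ∀ T : ℕ, 1 ≤ T →
      f (θ T) - (⨅ ξ : Fin d → ℝ, f ξ) ≤ 8 * d * logVar d / ((T : ℝ) + 2) := by
  have hd0 : 0 < d := by omega
  haveI : Nonempty (Fin d) := Fin.pos_iff_nonempty.mp hd0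
  have hdV : 0 < (d : ℝ) * logVar d := NGD.dlogVar_pos hd
  set D : ℝ := Real.sqrt (d * logVar d) with hDdef
  have hD : 0 < D := Real.sqrt_pos.mpr hdV
  have hD2 : D ^ 2 = d * logVar d := Real.sq_sqrt hdV.le
  have hlam' : lam = 1 / D := hlam
  have hlampos : 0 < lam := by rw [hlam']; positivity
  have hlamD : lam * D = 1 := by rw [hlam']; field_simp
  -- the minimizer
  set m : ℝ := (∑ j ∈ Finset.Icc 1 d, Real.log j) / d with hm
  set θstar : Fin d → ℝ := fun k => m - Real.log ((k : ℕ) + 1) with hθstar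
  have hstar_sq : ∑ k, θstar k ^ 2 = d * logVar d := NGD.sum_sq_star hd m hm
  have hNstar : l2norm θstar = D := by unfold l2norm; rw [hstar_sq]
  have hHpos : 0 < H := by
    rw [hH]; exact Finset.sum_pos (fun j _ => by positivity) Finset.univ_nonempty
  have hppos : ∀ k, 0 < p k := fun k => by
    rw [hp]; exact div_pos (by positivity) hHpos
  have hsoftstar : ∀ k, softmax θstar k = p k := by
    intro k
    have hexp : ∀ j : Fin d, Real.exp (θstar j) = Real.exp m * (1 / ((j : ℕ) + 1)) := by
      intro j
      rw [hθstar]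
      simp only []
      rw [Real.exp_sub, Real.exp_log (by positivity)]
      ring
    unfold softmax
    rw [hexp k, Finset.sum_congr rfl (fun j _ => hexp j), ← Finset.mul_sum, ← hH]
    rw [mul_div_mul_left _ _ (Real.exp_ne_zero m), hp]
  have hfstar : f θstar = 0 := by
    rw [hf]
    apply Finset.sum_eq_zero
    intro k _
    rw [hsoftstar k, div_self (hppos k).ne', Real.log_one, mul_zero]
  have hgrad : ∀ x k, grad f x k = softmax x k - p k :=
    fun x k => NGD.grad_eq hd0 H hH p hp f hf x k
  have hfnonneg : ∀ x, 0 ≤ f x := by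
    intro x
    have h := (NGD.f_bounds hd0 H hH p hp f hf θstar x).1
    have hz : ∑ k, (softmax θstar k - p k) * (x k - θstar k) = 0 :=
      Finset.sum_eq_zero fun k _ => by rw [hsoftstar k]; ring
    rw [hfstar, hz] at h
    linarith
  have hsmooth_star : ∀ x, f x ≤ (1/2) * (l2norm x + D) ^ 2 := by
    intro x
    have h := (NGD.f_bounds hd0 H hH p hp f hf θstar x).2
    have hz : ∑ k, (softmax θstar k - p k) * (x k - θstar k) = 0 :=
      Finset.sum_eq_zero fun k _ => by rw [hsoftstar k]; ring
    rw [hfstar, hz] at h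
    have he : ∑ k, (x k - θstar k) ^ 2 = l2norm (x - θstar) ^ 2 := by
      rw [NGD.l2norm_sq]; exact Finset.sum_congr rfl fun k _ => by simp [Pi.sub_apply]
    have htri : l2norm (x - θstar) ≤ l2norm x + D := by
      have h2 := NGD.l2norm_smul_sub_smul_le 1 1 x θstar
      simp only [one_smul, abs_one, one_mul] at h2
      rw [hNstar] at h2
      exact h2
    have hsq : l2norm (x - θstar) ^ 2 ≤ (l2norm x + D) ^ 2 := by
      apply pow_le_pow_left₀ (NGD.l2norm_nonneg _) htri
    rw [he] at h
    linarith
  have hLeta : ∀ t : ℕ, lam * η t = 2 / ((t : ℝ) + 1) := by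
    intro t
    rw [hη t]
    have : ((t : ℝ) + 1) ≠ 0 := by positivity
    field_simp
  have hηval : ∀ t : ℕ, η t = 2 * D / ((t : ℝ) + 1) := by
    intro t
    rw [hη t, hlam']
    have : ((t : ℝ) + 1) ≠ 0 := by positivity
    field_simp
  have hηpos : ∀ t : ℕ, 0 < η t := by
    intro t; rw [hηval t]; positivity
  -- the main one-step recursion
  have hrec : ∀ t, f (θ (t+1)) ≤ (1 - lam * η t) * f (θ t)
      + (1/2) * (lam * η t * l2norm (θ t) + η t) ^ 2 := by
    intro t
    have hLetapos : 0 < lam * η t := by rw [hLeta t]; positivity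
    have hstep : ∀ k, θ (t+1) k - θ t k = -(lam * η t) * θ t k - η t * Δ t k := by
      intro k
      rw [hupdate t]
      simp only [Pi.sub_apply, Pi.smul_apply, smul_eq_mul]
      ring
    have h1 := (NGD.f_bounds hd0 H hH p hp f hf (θ t) (θ (t+1))).2
    set G : Fin d → ℝ := grad f (θ t) with hG
    have hGk : ∀ k, softmax (θ t) k - p k = G k := fun k => (hgrad (θ t) k).symm
    -- convexity lower bound on ∑ G k * θ t k
    have hA : f (θ t) - l2norm G * D ≤ ∑ k, G k * θ t k := by
      have h2 := (NGD.f_bounds hd0 H hH p hp f hf (θ t) θstar).1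
      rw [hfstar] at h2
      have he : ∑ k, (softmax (θ t) k - p k) * (θstar k - θ t k)
          = (∑ k, G k * θstar k) - ∑ k, G k * θ t k := by
        rw [← Finset.sum_sub_distrib]
        exact Finset.sum_congr rfl fun k _ => by rw [← hGk k]; ring
      rw [he] at h2
      have hcs := NGD.cs_ge G θstar
      rw [hNstar] at hcs
      linarith
    -- the inner product term
    have hinner : ∑ k, (softmax (θ t) k - p k) * (θ (t+1) k - θ t k)
        = -(lam * η t) * (∑ k, G k * θ t k) - η t * l2norm G := by
      rw [← hΔdir t, ← hG]
      rw [Finset.mul_sum, Finset.mul_sum, ← Finset.sum_sub_distrib]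
      exact Finset.sum_congr rfl fun k _ => by rw [hGk k, hstep k]; ring
    have hinner_le : ∑ k, (softmax (θ t) k - p k) * (θ (t+1) k - θ t k)
        ≤ -(lam * η t) * f (θ t) := by
      rw [hinner]
      have hmul : -(lam * η t) * (∑ k, G k * θ t k)
          ≤ -(lam * η t) * (f (θ t) - l2norm G * D) := by
        apply mul_le_mul_of_nonpos_left hA (by linarith)
      have hDη : lam * η t * D = η t := by
        calc lam * η t * D = lam * D * η t := by ring
        _ = η t := by rw [hlamD]; ring
      have hexp2 : -(lam * η t) * (f (θ t) - l2norm G * D)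
          = -(lam * η t) * f (θ t) + η t * l2norm G := by
        linear_combination (l2norm G) * hDη
      linarith [hmul, hexp2]
    -- the quadratic term
    have hquad : ∑ k, (θ (t+1) k - θ t k) ^ 2 ≤ (lam * η t * l2norm (θ t) + η t) ^ 2 := by
      have hdiff : (fun k => θ (t+1) k - θ t k) = (-(lam * η t)) • θ t - η t • Δ t := by
        funext k
        rw [hstep k]
        simp only [Pi.sub_apply, Pi.smul_apply, smul_eq_mul]
      have hb := NGD.l2norm_smul_sub_smul_le (-(lam * η t)) (η t) (θ t) (Δ t)
      rw [abs_neg, abs_of_pos hLetapos, abs_of_pos (hηpos t)] at hb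
      have hb2 : lam * η t * l2norm (θ t) + η t * l2norm (Δ t)
          ≤ lam * η t * l2norm (θ t) + η t := by
        have := hΔnorm t
        nlinarith [hηpos t]
      have hsum_eq : ∑ k, (θ (t+1) k - θ t k) ^ 2
          = l2norm ((-(lam * η t)) • θ t - η t • Δ t) ^ 2 := by
        rw [NGD.l2norm_sq, ← hdiff]
      rw [hsum_eq]
      apply pow_le_pow_left₀ (NGD.l2norm_nonneg _) (hb.trans hb2)
    calc f (θ (t+1)) ≤ f (θ t) + (∑ k, (softmax (θ t) k - p k) * (θ (t+1) k - θ t k))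
          + (1/2) * ∑ k, (θ (t+1) k - θ t k) ^ 2 := h1
      _ ≤ f (θ t) + (-(lam * η t) * f (θ t))
          + (1/2) * (lam * η t * l2norm (θ t) + η t) ^ 2 := by linarith [hinner_le, hquad]
      _ = (1 - lam * η t) * f (θ t) + (1/2) * (lam * η t * l2norm (θ t) + η t) ^ 2 := by ring
  -- norm bound for t ≥ 2
  have hnorm : ∀ t, 2 ≤ t → l2norm (θ t) ≤ D := by
    intro t ht
    induction t, ht using Nat.le_induction with
    | base =>
        have h1 : θ 2 = (1 - lam * η 1) • θ 1 - η 1 • Δ 1 := hupdate 1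
        have hLeta1 : lam * η 1 = 1 := by rw [hLeta 1]; norm_num
        have hb := NGD.l2norm_smul_sub_smul_le (1 - lam * η 1) (η 1) (θ 1) (Δ 1)
        rw [← h1, hLeta1] at hb
        simp only [sub_self, abs_zero, zero_mul, zero_add] at hb
        have hη1 : η 1 = D := by rw [hηval 1]; norm_num
        calc l2norm (θ 2) ≤ |η 1| * l2norm (Δ 1) := hb
          _ ≤ η 1 * 1 := by
              rw [abs_of_pos (hηpos 1)]
              exact mul_le_mul_of_nonneg_left (hΔnorm 1) (hηpos 1).le
          _ = D := by rw [hη1]; ring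
    | succ t ht ih =>
        have h1 : θ (t+1) = (1 - lam * η t) • θ t - η t • Δ t := hupdate t
        have hb := NGD.l2norm_smul_sub_smul_le (1 - lam * η t) (η t) (θ t) (Δ t)
        rw [← h1] at hb
        have ht' : (2:ℝ) ≤ (t:ℝ) := by exact_mod_cast ht
        have hLeta' : lam * η t = 2 / ((t:ℝ) + 1) := hLeta t
        have hcoef : 0 ≤ 1 - lam * η t := by
          rw [hLeta']
          rw [sub_nonneg, div_le_one (by linarith)]
          linarith
        rw [abs_of_nonneg hcoef, abs_of_pos (hηpos t)] at hb
        have hb2 : (1 - lam * η t) * l2norm (θ t) + η t * l2norm (Δ t) ≤ D := by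
          have hΔ := hΔnorm t
          have hl2nn := NGD.l2norm_nonneg (Δ t)
          have hstep1 : (1 - lam * η t) * l2norm (θ t) ≤ (1 - lam * η t) * D :=
            mul_le_mul_of_nonneg_left ih hcoef
          have hstep2 : η t * l2norm (Δ t) ≤ η t := by
            nlinarith [hηpos t]
          have : (1 - lam * η t) * D + η t = D := by
            rw [hLeta', hηval t]
            field_simp
            ring
          linarith
        exact hb.trans hb2
  -- T = 1 bound
  have hT1 : f (θ 1) ≤ 2 * D ^ 2 := by
    have h := hrec 0
    have hLeta0 : lam * η 0 = 2 := by rw [hLeta 0]; norm_num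
    have hη0 : η 0 = 2 * D := by rw [hηval 0]; norm_num
    rw [hθ0, NGD.l2norm_zero, hLeta0, hη0] at h
    have := hfnonneg (θ 0)
    rw [hθ0] at this
    nlinarith [h, this]
  -- main induction for T ≥ 2
  have hmain : ∀ T, 2 ≤ T → f (θ T) ≤ 8 * D ^ 2 / ((T : ℝ) + 2) := by
    intro T hT
    induction T, hT using Nat.le_induction with
    | base =>
        have h2 := hsmooth_star (θ 2)
        have hn2 := hnorm 2 le_rfl
        have hl2nn := NGD.l2norm_nonneg (θ 2)
        have hs : l2norm (θ 2) + D ≤ 2 * D := by linarith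
        have hsq : (l2norm (θ 2) + D) ^ 2 ≤ (2 * D) ^ 2 :=
          pow_le_pow_left₀ (by linarith) hs 2
        have hY : (2 * D) ^ 2 = 4 * D ^ 2 := by ring
        have hfb : f (θ 2) ≤ 2 * D ^ 2 := by linarith [h2, hsq]
        have h4 : ((2:ℕ) : ℝ) + 2 = 4 := by norm_num
        rw [h4]
        linarith
    | succ T hT ih =>
        have hR := hrec T
        have hnT := hnorm T hT
        have hT' : (2:ℝ) ≤ (T:ℝ) := by exact_mod_cast hT
        set u : ℝ := (T : ℝ) with hu
        have hLeta' : lam * η T = 2 / (u + 1) := hLeta T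
        have hη' : η T = 2 * D / (u + 1) := hηval T
        have hcoef : 0 ≤ 1 - lam * η T := by
          rw [hLeta', sub_nonneg, div_le_one (by linarith)]; linarith
        have harg : lam * η T * l2norm (θ T) + η T ≤ 4 * D / (u + 1) := by
          rw [hLeta', hη']
          have h1 : 2 / (u + 1) * l2norm (θ T) ≤ 2 / (u + 1) * D :=
            mul_le_mul_of_nonneg_left hnT (by positivity)
          have h2 : 2 / (u + 1) * D + 2 * D / (u + 1) = 4 * D / (u + 1) := by
            field_simp; ring
          linarith
        have hargnn : 0 ≤ lam * η T * l2norm (θ T) + η T := by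
          have h1 := NGD.l2norm_nonneg (θ T)
          have h2 := (hηpos T).le
          have h3 : 0 ≤ lam * η T := by rw [hLeta']; positivity
          have := mul_nonneg h3 h1
          linarith
        have hsq : (lam * η T * l2norm (θ T) + η T) ^ 2 ≤ (4 * D / (u + 1)) ^ 2 :=
          pow_le_pow_left₀ hargnn harg 2
        have hfM : (1 - lam * η T) * f (θ T) ≤ (1 - lam * η T) * (8 * D ^ 2 / (u + 2)) :=
          mul_le_mul_of_nonneg_left ih hcoef
        have hchain : f (θ (T+1)) ≤ (1 - lam * η T) * (8 * D ^ 2 / (u + 2))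
            + (1/2) * (4 * D / (u + 1)) ^ 2 := by linarith [hR, hfM, hsq]
        have e1 : (1 - lam * η T) * (8 * D ^ 2 / (u + 2)) + (1/2) * (4 * D / (u + 1)) ^ 2
            = 8 * D ^ 2 * (((u-1)*(u+1) + (u+2)) / ((u+1)^2*(u+2))) := by
          rw [hLeta']
          field_simp
          ring
        have e2 : 8 * D ^ 2 * (((u-1)*(u+1) + (u+2)) / ((u+1)^2*(u+2)))
            ≤ 8 * D ^ 2 / (u + 3) := by
          rw [← mul_div_assoc]
          rw [div_le_div_iff₀ (by positivity) (by positivity)]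
          nlinarith [mul_nonneg (sq_nonneg D) (by linarith : (0:ℝ) ≤ u - 1)]
        have hgoal : ((T + 1 : ℕ) : ℝ) + 2 = u + 3 := by push_cast; ring
        rw [hgoal]
        rw [e1] at hchain
        exact hchain.trans e2
  -- conclude
  intro T hT
  have hInf : 0 ≤ ⨅ ξ : Fin d → ℝ, f ξ := le_ciInf fun ξ => hfnonneg ξ
  have hEq : 8 * (d:ℝ) * logVar d / ((T:ℝ) + 2) = 8 * D ^ 2 / ((T:ℝ) + 2) := by
    rw [hD2]; ring
  rw [hEq]
  rcases Nat.lt_or_ge T 2 with h2 | h2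
  · have hT1' : T = 1 := by omega
    subst hT1'
    have : ((1:ℕ):ℝ) + 2 = 3 := by norm_num
    rw [this]
    nlinarith [hT1, hInf, hD]
  · have := hmain T h2
    linarith
end

section
/- Fix d ≥ 2 and let p be any probability vector in ℝ^d with all p_k > 0, and let f(θ) = KL(p‖σ(θ)), whose Hessian is ∇²f(θ) = diag(σ(θ)) − σ(θ)σ(θ)ᵀ. If α ∈ ℝ^d is such that the diagonal matrix A = diag(α₁, …, α_d) satisfies ∇²f(θ) ⪯ A for all θ ∈ ℝ^d (i.e., ∑_k σ(θ)_k x_k² − (∑_k σ(θ)_k x_k)² ≤ ∑_k α_k x_k² for all θ, x ∈ ℝ^d), then tr(A) = ∑_{k=1}^d α_k ≥ d/2. Hence the diagonal adaptive smoothness of f, defined as the minimal trace of a diagonal matrix dominating the Hessian everywhere, is at least d/2. -/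
lemma pair_lb (d : ℕ) (hd : 2 ≤ d) (α : Fin d → ℝ)
    (hdom : ∀ θ x : Fin d → ℝ,
      ∑ k, softmax θ k * (x k) ^ 2 - (∑ k, softmax θ k * x k) ^ 2 ≤
        ∑ k, α k * (x k) ^ 2)
    (i j : Fin d) (hij : i ≠ j) : 1 ≤ α i + α j := by
  set c : ℝ := (d : ℝ) - 2 with hc
  have hc0 : 0 ≤ c := by
    have : (2 : ℝ) ≤ (d : ℝ) := by exact_mod_cast hd
    linarith
  -- for each t, 2 e^t / (2 e^t + c) ≤ α i + α j
  have key : ∀ t : ℝ, 2 * Real.exp t / (2 * Real.exp t + c) ≤ α i + α j := by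
    intro t
    set θ : Fin d → ℝ := fun k => if k = i ∨ k = j then t else 0 with hθ
    set x : Fin d → ℝ := fun k => if k = i then 1 else if k = j then -1 else 0 with hx
    have hS : ∑ k, Real.exp (θ k) = 2 * Real.exp t + c := by
      have h1 : ∀ k : Fin d, Real.exp (θ k) =
          1 + ((if k = i then Real.exp t - 1 else 0) + (if k = j then Real.exp t - 1 else 0)) := by
        intro k
        simp only [hθ]
        rcases eq_or_ne k i with rfl | hki
        · simp [hij, Real.exp_zero]
        · rcases eq_or_ne k j with rfl | hkj
          · simp [hki]
          · simp [hki, hkj, Real.exp_zero]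
      rw [Finset.sum_congr rfl fun k _ => h1 k]
      rw [Finset.sum_add_distrib, Finset.sum_add_distrib, Finset.sum_const,
        Finset.sum_ite_eq' Finset.univ i, Finset.sum_ite_eq' Finset.univ j]
      simp [hc]
      ring
    have hSpos : 0 < 2 * Real.exp t + c := by positivity
    have hσi : softmax θ i = Real.exp t / (2 * Real.exp t + c) := by
      simp only [softmax, hS]
      simp [hθ]
    have hσj : softmax θ j = Real.exp t / (2 * Real.exp t + c) := by
      simp only [softmax, hS]
      simp [hθ]
    have h2 : ∑ k, softmax θ k * (x k) ^ 2 = softmax θ i + softmax θ j := by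
      have h1 : ∀ k : Fin d, softmax θ k * (x k) ^ 2 =
          (if k = i then softmax θ i else 0) + (if k = j then softmax θ j else 0) := by
        intro k
        simp only [hx]
        rcases eq_or_ne k i with rfl | hki
        · simp [hij]
        · rcases eq_or_ne k j with rfl | hkj
          · simp [hki]
          · simp [hki, hkj]
      rw [Finset.sum_congr rfl fun k _ => h1 k, Finset.sum_add_distrib,
        Finset.sum_ite_eq' Finset.univ i, Finset.sum_ite_eq' Finset.univ j]
      simp
    have h3 : ∑ k, softmax θ k * x k = 0 := by
      have h1 : ∀ k : Fin d, softmax θ k * x k =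
          (if k = i then softmax θ i else 0) + (if k = j then -softmax θ j else 0) := by
        intro k
        simp only [hx]
        rcases eq_or_ne k i with rfl | hki
        · simp [hij]
        · rcases eq_or_ne k j with rfl | hkj
          · simp [hki]
          · simp [hki, hkj]
      rw [Finset.sum_congr rfl fun k _ => h1 k, Finset.sum_add_distrib,
        Finset.sum_ite_eq' Finset.univ i, Finset.sum_ite_eq' Finset.univ j]
      simp [hσi, hσj]
    have h4 : ∑ k, α k * (x k) ^ 2 = α i + α j := by
      have h1 : ∀ k : Fin d, α k * (x k) ^ 2 =
          (if k = i then α i else 0) + (if k = j then α j else 0) := by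
        intro k
        simp only [hx]
        rcases eq_or_ne k i with rfl | hki
        · simp [hij]
        · rcases eq_or_ne k j with rfl | hkj
          · simp [hki]
          · simp [hki, hkj]
      rw [Finset.sum_congr rfl fun k _ => h1 k, Finset.sum_add_distrib,
        Finset.sum_ite_eq' Finset.univ i, Finset.sum_ite_eq' Finset.univ j]
      simp
    have := hdom θ x
    rw [h2, h3, h4, hσi, hσj] at this
    calc 2 * Real.exp t / (2 * Real.exp t + c)
        = Real.exp t / (2 * Real.exp t + c) + Real.exp t / (2 * Real.exp t + c) - 0 ^ 2 := by ring
      _ ≤ α i + α j := this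
  -- take t → ∞
  have hT : Filter.Tendsto (fun t : ℝ => 2 * Real.exp t / (2 * Real.exp t + c))
      Filter.atTop (nhds 1) := by
    have heq : ∀ t : ℝ, 2 * Real.exp t / (2 * Real.exp t + c)
        = 2 / (2 + c * Real.exp (-t)) := by
      intro t
      have h1 : (0:ℝ) < 2 * Real.exp t + c := by positivity
      have h2 : (0:ℝ) < 2 + c * Real.exp (-t) := by positivity
      rw [Real.exp_neg] at h2 ⊢
      field_simp
    simp only [heq]
    have h2 : Filter.Tendsto (fun t : ℝ => 2 + c * Real.exp (-t)) Filter.atTop (nhds 2) := by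
      have := (Real.tendsto_exp_neg_atTop_nhds_zero.const_mul c).const_add (2:ℝ)
      simpa using this
    have := Filter.Tendsto.div (tendsto_const_nhds (x := (2:ℝ)) (f := Filter.atTop)) h2
      (by norm_num)
    rw [div_self (by norm_num : (2:ℝ) ≠ 0)] at this
    exact this
  exact le_of_tendsto' hT key

/-- if the diagonal matrix `A = diag(α)` dominates the Hessian
`∇²f(θ) = diag(σ(θ)) − σ(θ)σ(θ)ᵀ` of `f(θ) = KL(p‖σ(θ))` for every `θ` (i.e.
`∑_k σ(θ)_k x_k² − (∑_k σ(θ)_k x_k)² ≤ ∑_k α_k x_k²` for all `θ, x`), then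
`tr(A) = ∑_k α_k ≥ d/2`; hence the diagonal adaptive smoothness of `f` is at least `d/2`. -/
theorem softmax_unigram_adaptive_smoothness_lower (d : ℕ) (hd : 2 ≤ d)
    (p : Fin d → ℝ) (hp0 : ∀ k, 0 < p k) (hp1 : ∑ k, p k = 1)
    (α : Fin d → ℝ)
    (hdom : ∀ θ x : Fin d → ℝ,
      ∑ k, softmax θ k * (x k) ^ 2 - (∑ k, softmax θ k * x k) ^ 2 ≤
        ∑ k, α k * (x k) ^ 2) :
    (d : ℝ) / 2 ≤ ∑ k, α k := by
  set S := ∑ k, α k with hS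
  have key : ∀ i : Fin d, ∀ j ∈ Finset.univ.erase i, (1:ℝ) ≤ α i + α j := by
    intro i j hj
    exact pair_lb d hd α hdom i j (Finset.ne_of_mem_erase hj).symm
  have hsum : (d : ℝ) * (d - 1) ≤ 2 * (d - 1) * S := by
    have h1 : ∀ i : Fin d, ((d:ℝ) - 1) ≤ ∑ j ∈ Finset.univ.erase i, (α i + α j) := by
      intro i
      have := Finset.sum_le_sum (key i)
      have hcard : (Finset.univ.erase i).card = d - 1 := by
        simp [Finset.card_erase_of_mem]
      rw [Finset.sum_const, hcard] at this
      have : ((d - 1 : ℕ) : ℝ) ≤ ∑ j ∈ Finset.univ.erase i, (α i + α j) := by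
        simpa using this
      have hcast : ((d - 1 : ℕ) : ℝ) = (d : ℝ) - 1 := by
        have : 1 ≤ d := le_trans (by norm_num) hd
        push_cast [Nat.cast_sub this]
        ring
      linarith [this]
    have h2 : ∑ i : Fin d, ∑ j ∈ Finset.univ.erase i, (α i + α j) = 2 * (d - 1) * S := by
      have h3 : ∀ i : Fin d, ∑ j ∈ Finset.univ.erase i, (α i + α j)
          = ((d:ℝ) - 1) * α i + (S - α i) := by
        intro i
        rw [Finset.sum_add_distrib, Finset.sum_const]
        have hcard : (Finset.univ.erase i).card = d - 1 := by
          simp [Finset.card_erase_of_mem]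
        have h1d : 1 ≤ d := le_trans (by norm_num) hd
        rw [hcard, Finset.sum_erase_eq_sub (Finset.mem_univ i), nsmul_eq_mul,
          Nat.cast_sub h1d]
        push_cast
        ring
      rw [Finset.sum_congr rfl fun i _ => h3 i, Finset.sum_add_distrib, Finset.sum_sub_distrib]
      rw [← Finset.mul_sum, Finset.sum_const, ← hS]
      simp [Finset.card_univ]
      ring
    calc (d:ℝ) * (d - 1) = ∑ i : Fin d, ((d:ℝ) - 1) := by
          rw [Finset.sum_const]; simp [Finset.card_univ]
      _ ≤ ∑ i : Fin d, ∑ j ∈ Finset.univ.erase i, (α i + α j) :=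
          Finset.sum_le_sum fun i _ => h1 i
      _ = 2 * (d - 1) * S := h2
  have hd1 : (0:ℝ) < (d:ℝ) - 1 := by
    have : (2 : ℝ) ≤ (d : ℝ) := by exact_mod_cast hd
    linarith
  nlinarith [hsum, hd1]
end
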